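/- arXiv:1406.4784 — 6 statements merged into one kernel-verified Lean document; each statement's English description precedes it below -/
import Mathlib

section
/- Let Ω = {1,...,D} be a finite set and let S₁, S₂ be nonempty subsets of Ω. If π is a uniformly random permutation of Ω, then the probability that min(π(S₁)) = min(π(S₂)) equals |S₁ ∩ S₂| / |S₁ ∪ S₂|. -/
/-!
The minima of `π(S₁)` and `π(S₂)` agree exactly when the element of `S₁ ∪ S₂` that `π` sends
lowest lies in `S₁ ∩ S₂`. This lowest element is uniformly distributed on `S₁ ∪ S₂`: for
`x, y ∈ S₁ ∪ S₂`, the bijection `π ↦ π * swap x y` of permutations maps the permutations whose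
lowest element is `x` onto those whose lowest element is `y`.
-/

open Finset

theorem Finset.min'_eq_min'_iff_min'_union_mem_inter {α : Type*} [LinearOrder α]
    {A B : Finset α} (hA : A.Nonempty) (hB : B.Nonempty) :
    A.min' hA = B.min' hB ↔ (A ∪ B).min' (hA.mono subset_union_left) ∈ A ∩ B := by
  rw [min'_union hA hB, mem_inter]
  constructor
  · intro h
    rw [h, inf_idem]
    exact ⟨h ▸ min'_mem A hA, min'_mem B hB⟩
  · rintro ⟨hmA, hmB⟩
    exact le_antisymm ((min'_le A _ hmA).trans inf_le_right) ((min'_le B _ hmB).trans inf_le_left)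

theorem Finset.image_swap_of_mem {α : Type*} [DecidableEq α] {U : Finset α} {x y : α}
    (hx : x ∈ U) (hy : y ∈ U) : U.image (Equiv.swap x y) = U := by
  simpa [map_eq_image] using map_perm (s := U) (σ := Equiv.swap x y) fun a ha => by
    rcases (Equiv.swap_apply_ne_self_iff.mp ha).2 with rfl | rfl <;> assumption

namespace Equiv.Perm

variable {α : Type*} [LinearOrder α]

def argminOn (π : Perm α) (U : Finset α) (hU : U.Nonempty) : α :=
  π.symm ((U.image π).min' (hU.image π))

section argminOn

variable (π : Perm α) {U : Finset α} (hU : U.Nonempty)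

theorem argminOn_mem : argminOn π U hU ∈ U := by
  rw [← π.injective.mem_finset_image, argminOn, apply_symm_apply]
  exact min'_mem _ _

theorem min'_image_eq_min'_image_iff {S₁ S₂ : Finset α} (h₁ : S₁.Nonempty) (h₂ : S₂.Nonempty) :
    (S₁.image π).min' (h₁.image π) = (S₂.image π).min' (h₂.image π) ↔
      argminOn π (S₁ ∪ S₂) (h₁.mono subset_union_left) ∈ S₁ ∩ S₂ := by
  rw [min'_eq_min'_iff_min'_union_mem_inter, ← π.injective.mem_finset_image (s := S₁ ∩ S₂),
    image_inter _ _ π.injective, argminOn, apply_symm_apply]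
  simp_rw [image_union]

theorem argminOn_mul_swap {x y : α} (hx : x ∈ U) (hy : y ∈ U) :
    argminOn (π * swap x y) U hU = swap x y (argminOn π U hU) := by
  have himage : U.image (π * swap x y) = U.image π := by
    rw [coe_mul, ← image_image, image_swap_of_mem hx hy]
  simp only [argminOn, himage, ← inv_def, mul_inv_rev, swap_inv, mul_apply]

variable [Fintype α]

theorem card_argminOn_eq_card_argminOn_eq {x y : α} (hx : x ∈ U) (hy : y ∈ U) :
    #{π : Perm α | argminOn π U hU = x} = #{π : Perm α | argminOn π U hU = y} :=
  card_equiv (Equiv.mulRight (swap x y)) fun π => by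
    simp only [mem_filter, mem_univ, true_and, coe_mulRight, argminOn_mul_swap π hU hx hy,
      swap_apply_eq_iff, swap_apply_right]

theorem card_argminOn_mem {T : Finset α} (hT : T ⊆ U) {x : α} (hx : x ∈ U) :
    #{π : Perm α | argminOn π U hU ∈ T} = #T * #{π : Perm α | argminOn π U hU = x} := by
  rw [card_eq_sum_card_fiberwise (s := {π : Perm α | argminOn π U hU ∈ T}) (t := T)
    fun π hπ => (mem_filter.mp hπ).2]
  refine sum_const_nat fun b hb => ?_
  rw [filter_filter, ← card_argminOn_eq_card_argminOn_eq hU (hT hb) hx]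
  congr 1
  exact filter_congr fun π _ => ⟨And.right, fun h => ⟨h ▸ hb, h⟩⟩

theorem card_argminOn_mem_div_card {T : Finset α} (hT : T ⊆ U) :
    (#{π : Perm α | argminOn π U hU ∈ T} : ℝ) / Fintype.card (Perm α) = #T / #U := by
  obtain ⟨x, hx⟩ := id hU
  have hcard : Fintype.card (Perm α) = #U * #{π : Perm α | argminOn π U hU = x} := by
    rw [← card_argminOn_mem hU subset_rfl hx, filter_true_of_mem fun π _ => argminOn_mem π hU,
      card_univ]
  have hfiber : (#{π : Perm α | argminOn π U hU = x} : ℝ) ≠ 0 := by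
    have := hcard ▸ Fintype.card_pos (α := Perm α)
    exact_mod_cast (Nat.pos_of_mul_pos_left this).ne'
  rw [card_argminOn_mem _ hT hx, hcard]
  push_cast
  exact mul_div_mul_right _ _ hfiber

end argminOn

end Equiv.Perm

theorem minhash_collision_prob_general (D : ℕ) (S₁ S₂ : Finset (Fin D))
    (h₁ : S₁.Nonempty) (h₂ : S₂.Nonempty) :
    ((Finset.univ.filter fun π : Equiv.Perm (Fin D) =>
        (S₁.image π).min' (h₁.image π) = (S₂.image π).min' (h₂.image π)).card : ℝ) /
      (Fintype.card (Equiv.Perm (Fin D))) =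
    ((S₁ ∩ S₂).card : ℝ) / ((S₁ ∪ S₂).card) := by
  simp_rw [Equiv.Perm.min'_image_eq_min'_image_iff _ h₁ h₂]
  exact Equiv.Perm.card_argminOn_mem_div_card _ inter_subset_union

/-- Minwise hashing LSH property: for a uniformly random permutation π of {1,...,D},
Pr(min π(S₁) = min π(S₂)) = |S₁ ∩ S₂| / |S₁ ∪ S₂|. -/
theorem minhash_collision_prob (D : ℕ) (hD : 0 < D) (S₁ S₂ : Finset (Fin D))
    (h₁ : S₁.Nonempty) (h₂ : S₂.Nonempty) :
    ((Finset.univ.filter fun π : Equiv.Perm (Fin D) =>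
        (S₁.image π).min' (h₁.image π) = (S₂.image π).min' (h₂.image π)).card : ℝ) /
      (Fintype.card (Equiv.Perm (Fin D))) =
    ((S₁ ∩ S₂).card : ℝ) / ((S₁ ∪ S₂).card) :=
  minhash_collision_prob_general D S₁ S₂ h₁ h₂
end

section
/- Fix k bins arranged in a circle and suppose exactly m of them are nonempty, 2 ≤ m, with the set of nonempty bins uniformly distributed over all m-element subsets. For each empty bin, define its 'parent' to be the nearest nonempty bin in the clockwise direction. Then for any two distinct empty-bin positions chosen uniformly at random (over all configurations), the probability that they have the same parent is 2/(m+1). -/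
open Finset
open scoped Classical

/-- The nearest nonempty bin (member of `A`) in the clockwise (increasing index, mod k)
direction from position `i`. -/
noncomputable def clockParent (k : ℕ) (A : Finset (ZMod k)) (i : ZMod k) : ZMod k :=
  if h : ∃ z : ℕ, 0 < z ∧ (i + (z : ZMod k)) ∈ A then i + ((Nat.find h : ℕ) : ZMod k) else i

variable {k : ℕ} [NeZero k]

lemma exists_step {A : Finset (ZMod k)} (hA : A.Nonempty) (i : ZMod k) :
    ∃ z : ℕ, 0 < z ∧ (i + (z : ZMod k)) ∈ A := by
  obtain ⟨a, ha⟩ := hA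
  rcases eq_or_ne a i with rfl | hne
  · exact ⟨k, Nat.pos_of_ne_zero (NeZero.ne k), by simp [ZMod.natCast_self, ha]⟩
  · refine ⟨(a - i).val, ?_, ?_⟩
    · have : a - i ≠ 0 := sub_ne_zero.mpr hne
      simpa [ZMod.val_eq_zero] using Nat.pos_of_ne_zero (fun h => this (ZMod.val_eq_zero _ |>.mp h))
    · have : (((a - i).val : ℕ) : ZMod k) = a - i := ZMod.natCast_rightInverse (a - i)
      rw [this]; simpa using ha

noncomputable def stepsTo (A : Finset (ZMod k)) (i : ZMod k) : ℕ :=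
  if h : ∃ z : ℕ, 0 < z ∧ (i + (z : ZMod k)) ∈ A then Nat.find h else 0

omit [NeZero k] in
lemma clockParent_eq_steps (A : Finset (ZMod k)) (i : ZMod k) :
    clockParent k A i = i + (stepsTo A i : ZMod k) := by
  unfold clockParent stepsTo
  split <;> simp

lemma stepsTo_pos {A : Finset (ZMod k)} (hA : A.Nonempty) (i : ZMod k) : 0 < stepsTo A i := by
  rw [stepsTo, dif_pos (exists_step hA i)]
  exact (Nat.find_spec (exists_step hA i)).1

lemma stepsTo_mem {A : Finset (ZMod k)} (hA : A.Nonempty) (i : ZMod k) :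
    i + (stepsTo A i : ZMod k) ∈ A := by
  rw [stepsTo, dif_pos (exists_step hA i)]
  exact (Nat.find_spec (exists_step hA i)).2

lemma stepsTo_min {A : Finset (ZMod k)} (hA : A.Nonempty) {i : ZMod k} {t : ℕ}
    (ht : 0 < t) (ht2 : t < stepsTo A i) : i + (t : ZMod k) ∉ A := by
  rw [stepsTo, dif_pos (exists_step hA i)] at ht2
  exact fun hmem => Nat.find_min (exists_step hA i) ht2 ⟨ht, hmem⟩

lemma stepsTo_le {A : Finset (ZMod k)} (hA : A.Nonempty) (i : ZMod k) :
    stepsTo A i ≤ k := by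
  rw [stepsTo, dif_pos (exists_step hA i)]
  obtain ⟨a, ha⟩ := hA
  rcases eq_or_ne a i with rfl | hne
  · exact Nat.find_le ⟨Nat.pos_of_ne_zero (NeZero.ne k), by simp [ha]⟩
  · refine le_trans (Nat.find_le ?_) (le_of_lt (ZMod.val_lt (a - i)))
    constructor
    · have h0 : a - i ≠ 0 := sub_ne_zero.mpr hne
      exact Nat.pos_of_ne_zero (fun h => h0 (by simpa [h] using (ZMod.natCast_rightInverse (a - i)).symm))
    · rw [ZMod.natCast_rightInverse (a - i)]; simpa using ha




noncomputable def arc (x y : ZMod k) : Finset (ZMod k) :=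
  (Finset.Ico 1 (y - x).val).image (fun t : ℕ => x + (t : ZMod k))

lemma mem_arc {x y z : ZMod k} :
    z ∈ arc x y ↔ ∃ t : ℕ, 1 ≤ t ∧ t < (y - x).val ∧ z = x + (t : ZMod k) := by
  simp [arc, eq_comm, and_assoc]

lemma natCast_inj_of_lt {a b : ℕ} (ha : a < k) (hb : b < k)
    (h : (a : ZMod k) = (b : ZMod k)) : a = b := by
  rw [← ZMod.val_natCast_of_lt ha, ← ZMod.val_natCast_of_lt hb, h]

lemma arc_card (x y : ZMod k) : (arc x y).card = (y - x).val - 1 := by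
  rw [arc, Finset.card_image_of_injOn, Nat.card_Ico]
  intro a ha b hb hab
  simp only [Finset.mem_coe, Finset.mem_Ico] at ha hb
  have hk := ZMod.val_lt (y - x)
  exact natCast_inj_of_lt (lt_trans ha.2 hk) (lt_trans hb.2 hk)
    (add_left_cancel (a := x) (by simpa using hab))

lemma self_not_mem_arc {x y : ZMod k} : x ∉ arc x y := by
  rw [mem_arc]
  rintro ⟨t, ht1, ht2, ht3⟩
  have hk := ZMod.val_lt (y - x)
  have : (t : ZMod k) = ((0 : ℕ) : ZMod k) := by
    rw [Nat.cast_zero]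
    exact left_eq_add.mp ht3
  have := natCast_inj_of_lt (lt_trans ht2 hk) (Nat.pos_of_ne_zero (NeZero.ne k)) this
  omega

lemma right_not_mem_arc {x y : ZMod k} : y ∉ arc x y := by
  rw [mem_arc]
  rintro ⟨t, ht1, ht2, ht3⟩
  have hk := ZMod.val_lt (y - x)
  have hy : y = x + (((y - x).val : ℕ) : ZMod k) := by
    rw [ZMod.natCast_rightInverse (y - x)]; ring
  rw [hy] at ht3
  have := natCast_inj_of_lt hk (lt_trans ht2 hk) (by
    have := ht3; rwa [add_right_inj] at this)
  omega

lemma val_sub_eq {x y : ZMod k} (hxy : x ≠ y) : (x - y).val = k - (y - x).val := by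
  have h1 : y - x ≠ 0 := sub_ne_zero.mpr (Ne.symm hxy)
  have : x - y = -(y - x) := by ring
  rw [this, ZMod.neg_val, if_neg h1]

lemma arc_disjoint {x y : ZMod k} (hxy : x ≠ y) : Disjoint (arc x y) (arc y x) := by
  rw [Finset.disjoint_left]
  intro z hz1 hz2
  rw [mem_arc] at hz1 hz2
  obtain ⟨t, ht1, ht2, rfl⟩ := hz1
  obtain ⟨s, hs1, hs2, hs3⟩ := hz2
  rw [val_sub_eq hxy] at hs2
  have hd := ZMod.val_lt (y - x)
  set d := (y - x).val with hdd
  have hy : y = x + ((d : ℕ) : ZMod k) := by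
    rw [hdd, ZMod.natCast_rightInverse (y - x)]; ring
  rw [hy, add_assoc, ← Nat.cast_add] at hs3
  have hd1 : 0 < d := by
    rcases Nat.eq_zero_or_pos d with h | h
    · exfalso; apply sub_ne_zero.mpr (Ne.symm hxy)
      have := ZMod.natCast_rightInverse (y - x)
      rw [← hdd, h, Nat.cast_zero] at this; exact this.symm
    · exact h
  have := natCast_inj_of_lt (lt_trans ht2 hd) (by omega : d + s < k) (by
    have := hs3; rwa [add_right_inj] at this)
  omega

lemma arc_cover {x y z : ZMod k} (hxy : x ≠ y) (hzx : z ≠ x) (hzy : z ≠ y) :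
    z ∈ arc x y ∨ z ∈ arc y x := by
  set s := (z - x).val with hs
  have hsk := ZMod.val_lt (z - x)
  have hz : z = x + ((s : ℕ) : ZMod k) := by
    rw [hs, ZMod.natCast_rightInverse (z - x)]; ring
  have hs0 : 0 < s := by
    rcases Nat.eq_zero_or_pos s with h | h
    · exfalso; apply hzx; rw [hz, h, Nat.cast_zero, add_zero]
    · exact h
  set d := (y - x).val with hd
  have hdk := ZMod.val_lt (y - x)
  have hy : y = x + ((d : ℕ) : ZMod k) := by
    rw [hd, ZMod.natCast_rightInverse (y - x)]; ring
  have hd0 : 0 < d := by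
    rcases Nat.eq_zero_or_pos d with h | h
    · exfalso; apply sub_ne_zero.mpr (Ne.symm hxy)
      have := ZMod.natCast_rightInverse (y - x)
      rw [← hd, h, Nat.cast_zero] at this; exact this.symm
    · exact h
  have hsd : s ≠ d := by
    intro h; apply hzy; rw [hz, h, ← hy]
  rcases lt_or_gt_of_ne hsd with h | h
  · left; rw [mem_arc]; exact ⟨s, hs0, by omega, hz⟩
  · right; rw [mem_arc]
    refine ⟨s - d, by omega, ?_, ?_⟩
    · rw [val_sub_eq hxy, ← hd]; omega
    · rw [hz, hy, add_assoc, ← Nat.cast_add]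
      congr 2
      omega


lemma stepsTo_le_of {A : Finset (ZMod k)} {i : ZMod k} {z : ℕ} (hz : 0 < z)
    (hmem : i + (z : ZMod k) ∈ A) : stepsTo A i ≤ z := by
  rw [stepsTo, dif_pos ⟨z, hz, hmem⟩]
  exact Nat.find_le ⟨hz, hmem⟩

lemma stepsTo_gt {A : Finset (ZMod k)} (hA : A.Nonempty) {x y : ZMod k} (hxy : x ≠ y)
    (hy : y ∉ A) (hemp : ∀ a ∈ A, a ∉ arc x y) : (y - x).val < stepsTo A x := by
  set d := (y - x).val with hd
  have hy' : y = x + ((d : ℕ) : ZMod k) := by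
    rw [hd, ZMod.natCast_rightInverse (y - x)]; ring
  by_contra hle
  push_neg at hle
  have h1 := stepsTo_pos hA x
  have h2 := stepsTo_mem hA x
  rcases lt_or_eq_of_le hle with h | h
  · exact hemp _ h2 (mem_arc.mpr ⟨stepsTo A x, h1, h, rfl⟩)
  · rw [h, ← hy'] at h2; exact hy h2

lemma parent_eq_of_empty_arc {A : Finset (ZMod k)} (hA : A.Nonempty) {x y : ZMod k}
    (hxy : x ≠ y) (hy : y ∉ A) (hemp : ∀ a ∈ A, a ∉ arc x y) :
    clockParent k A x = clockParent k A y := by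
  set d := (y - x).val with hd
  have hy' : y = x + ((d : ℕ) : ZMod k) := by
    rw [hd, ZMod.natCast_rightInverse (y - x)]; ring
  have hgt : d < stepsTo A x := stepsTo_gt hA hxy hy hemp
  have key : stepsTo A x = d + stepsTo A y := by
    have le1 : stepsTo A x ≤ d + stepsTo A y := by
      apply stepsTo_le_of (by have := stepsTo_pos hA y; omega)
      rw [Nat.cast_add, ← add_assoc, ← hy']
      exact stepsTo_mem hA y
    have le2 : stepsTo A y ≤ stepsTo A x - d := by
      apply stepsTo_le_of (by omega)
      rw [hy', add_assoc, ← Nat.cast_add]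
      have : d + (stepsTo A x - d) = stepsTo A x := by omega
      rw [this]
      exact stepsTo_mem hA x
    omega
  rw [clockParent_eq_steps, clockParent_eq_steps, key, Nat.cast_add, ← add_assoc, ← hy']

lemma parents_ne {A : Finset (ZMod k)} (hA : A.Nonempty) {x y : ZMod k} (hxy : x ≠ y)
    {a b : ZMod k} (hamem : a ∈ A) (ha : a ∈ arc x y) (hbmem : b ∈ A) (hb : b ∈ arc y x) :
    clockParent k A x ≠ clockParent k A y := by
  set d := (y - x).val with hd
  have hdk := ZMod.val_lt (y - x)
  have hy' : y = x + ((d : ℕ) : ZMod k) := by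
    rw [hd, ZMod.natCast_rightInverse (y - x)]; ring
  obtain ⟨t, ht1, ht2, rfl⟩ := mem_arc.mp ha
  obtain ⟨s, hs1, hs2, rfl⟩ := mem_arc.mp hb
  rw [val_sub_eq hxy, ← hd] at hs2
  have hsx : stepsTo A x ≤ t := stepsTo_le_of (by omega) hamem
  have hsy : stepsTo A y ≤ s := stepsTo_le_of (by omega) hbmem
  have hx1 := stepsTo_pos hA x
  have hy1 := stepsTo_pos hA y
  rw [clockParent_eq_steps, clockParent_eq_steps]
  set sx := stepsTo A x with hsx'
  set sy := stepsTo A y with hsy'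
  intro hEq
  rw [hy', add_assoc, ← Nat.cast_add] at hEq
  have := natCast_inj_of_lt (by omega : sx < k)
    (by omega : d + sy < k) (add_left_cancel (a := x) hEq)
  omega

lemma sameParent_iff {A : Finset (ZMod k)} (hA : A.Nonempty) {x y : ZMod k}
    (hx : x ∉ A) (hy : y ∉ A) (hxy : x ≠ y) :
    clockParent k A x = clockParent k A y ↔ A ⊆ arc y x ∨ A ⊆ arc x y := by
  constructor
  · intro hpar
    by_cases h1 : ∃ a ∈ A, a ∈ arc x y
    · by_cases h2 : ∃ b ∈ A, b ∈ arc y x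
      · obtain ⟨a, hamem, ha⟩ := h1
        obtain ⟨b, hbmem, hb⟩ := h2
        exact absurd hpar (parents_ne hA hxy hamem ha hbmem hb)
      · push_neg at h2
        right
        intro a haA
        have hax : a ≠ x := fun h => hx (h ▸ haA)
        have hay : a ≠ y := fun h => hy (h ▸ haA)
        rcases arc_cover hxy hax hay with h | h
        · exact h
        · exact absurd h (h2 a haA)
    · push_neg at h1
      left
      intro a haA
      have hax : a ≠ x := fun h => hx (h ▸ haA)
      have hay : a ≠ y := fun h => hy (h ▸ haA)
      rcases arc_cover hxy hax hay with h | h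
      · exact absurd h (h1 a haA)
      · exact h
  · rintro (h | h)
    · exact parent_eq_of_empty_arc hA hxy hy
        (fun a haA hmem => (Finset.disjoint_left.mp (arc_disjoint hxy)) hmem (h haA))
    · exact (parent_eq_of_empty_arc hA hxy.symm hx
        (fun a haA hmem => (Finset.disjoint_left.mp (arc_disjoint hxy.symm)) hmem (h haA))).symm

lemma hockey (n r : ℕ) : ∑ j ∈ Finset.range n, Nat.choose j r = Nat.choose n (r + 1) := by
  induction n with
  | zero => simp
  | succ n ih =>
    rw [Finset.sum_range_succ, ih, Nat.choose_succ_succ' n r, Nat.add_comm]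

lemma pair_count {m : ℕ} (hm : 2 ≤ m) {x y : ZMod k} (hxy : x ≠ y) :
    ((Finset.univ : Finset (Finset (ZMod k))).filter fun A =>
        A.card = m ∧ x ∉ A ∧ y ∉ A ∧ x ≠ y ∧ clockParent k A x = clockParent k A y).card
      = Nat.choose ((y - x).val - 1) m + Nat.choose ((x - y).val - 1) m := by
  have hset : ((Finset.univ : Finset (Finset (ZMod k))).filter fun A =>
      A.card = m ∧ x ∉ A ∧ y ∉ A ∧ x ≠ y ∧ clockParent k A x = clockParent k A y)
      = (arc x y).powersetCard m ∪ (arc y x).powersetCard m := by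
    ext A
    simp only [Finset.mem_filter, Finset.mem_univ, true_and, Finset.mem_union,
      Finset.mem_powersetCard]
    constructor
    · rintro ⟨hcard, hx, hy, -, hpar⟩
      have hA : A.Nonempty := Finset.card_pos.mp (by omega)
      rcases (sameParent_iff hA hx hy hxy).mp hpar with h | h
      · exact Or.inr ⟨h, hcard⟩
      · exact Or.inl ⟨h, hcard⟩
    · rintro (⟨hsub, hcard⟩ | ⟨hsub, hcard⟩)
      · have hA : A.Nonempty := Finset.card_pos.mp (by omega)
        have hx : x ∉ A := fun h => self_not_mem_arc (hsub h)
        have hy : y ∉ A := fun h => right_not_mem_arc (hsub h)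
        exact ⟨hcard, hx, hy, hxy, (sameParent_iff hA hx hy hxy).mpr (Or.inr hsub)⟩
      · have hA : A.Nonempty := Finset.card_pos.mp (by omega)
        have hx : x ∉ A := fun h => right_not_mem_arc (hsub h)
        have hy : y ∉ A := fun h => self_not_mem_arc (hsub h)
        exact ⟨hcard, hx, hy, hxy, (sameParent_iff hA hx hy hxy).mpr (Or.inl hsub)⟩
  rw [hset, Finset.card_union_of_disjoint, Finset.card_powersetCard,
    Finset.card_powersetCard, arc_card, arc_card]
  rw [Finset.disjoint_left]
  intro A hA1 hA2
  rw [Finset.mem_powersetCard] at hA1 hA2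
  obtain ⟨a, ha⟩ := Finset.card_pos.mp (show 0 < A.card by omega)
  exact Finset.disjoint_left.mp (arc_disjoint hxy) (hA1.1 ha) (hA2.1 ha)

lemma sum_over_y (x : ZMod k) (f : ℕ → ℕ) :
    ∑ y ∈ Finset.univ.filter (fun y => x ≠ y), f ((y - x).val) = ∑ d ∈ Finset.Ico 1 k, f d := by
  apply Finset.sum_nbij' (i := fun y => (y - x).val) (j := fun d => x + (d : ZMod k))
  · intro y hy
    simp only [Finset.mem_filter, Finset.mem_univ, true_and] at hy
    rw [Finset.mem_Ico]
    refine ⟨?_, ZMod.val_lt _⟩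
    have : y - x ≠ 0 := sub_ne_zero.mpr (Ne.symm hy)
    have : (y - x).val ≠ 0 := fun h => this (ZMod.val_eq_zero _ |>.mp h)
    omega
  · intro d hd
    rw [Finset.mem_Ico] at hd
    simp only [Finset.mem_filter, Finset.mem_univ, true_and]
    intro h
    have : (d : ZMod k) = ((0 : ℕ) : ZMod k) := by
      rw [Nat.cast_zero]; exact left_eq_add.mp h
    have := natCast_inj_of_lt hd.2 (Nat.pos_of_ne_zero (NeZero.ne k)) this
    omega
  · intro y hy
    rw [ZMod.natCast_rightInverse (y - x)]; ring
  · intro d hd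
    rw [Finset.mem_Ico] at hd
    rw [add_sub_cancel_left, ZMod.val_natCast_of_lt hd.2]
  · intro y hy
    rfl

lemma sum_arcs (m : ℕ) (hk4 : 2 ≤ k) :
    ∑ d ∈ Finset.Ico 1 k, (Nat.choose (d - 1) m + Nat.choose (k - d - 1) m)
      = 2 * Nat.choose (k - 1) (m + 1) := by
  rw [Finset.sum_add_distrib, Finset.sum_Ico_eq_sum_range, Finset.sum_Ico_eq_sum_range]
  have e1 : ∀ i ∈ Finset.range (k - 1), Nat.choose (1 + i - 1) m = Nat.choose i m := by
    intro i _; congr 1; omega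
  have e2 : ∀ i ∈ Finset.range (k - 1), Nat.choose (k - (1 + i) - 1) m
      = Nat.choose ((k - 1) - 1 - i) m := by
    intro i _; congr 1; omega
  rw [Finset.sum_congr rfl e1, Finset.sum_congr rfl e2,
    Finset.sum_range_reflect (fun j => Nat.choose j m) (k - 1), hockey]
  omega

lemma num_count (m : ℕ) (hm : 2 ≤ m) (hk : m + 2 ≤ k) :
    ((Finset.univ : Finset (Finset (ZMod k) × ZMod k × ZMod k)).filter fun p =>
        p.1.card = m ∧ p.2.1 ∉ p.1 ∧ p.2.2 ∉ p.1 ∧ p.2.1 ≠ p.2.2 ∧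
        clockParent k p.1 p.2.1 = clockParent k p.1 p.2.2).card
      = k * (2 * Nat.choose (k - 1) (m + 1)) := by
  have inner : ∀ x y : ZMod k,
      (∑ A : Finset (ZMod k), if (A.card = m ∧ x ∉ A ∧ y ∉ A ∧ x ≠ y ∧
        clockParent k A x = clockParent k A y) then 1 else 0)
      = if x ≠ y then Nat.choose ((y - x).val - 1) m + Nat.choose ((x - y).val - 1) m
        else 0 := by
    intro x y
    rw [← Finset.card_filter]
    by_cases hxy : x ≠ y
    · rw [if_pos hxy, pair_count hm hxy]
    · rw [if_neg hxy]
      rw [Finset.card_eq_zero, Finset.filter_eq_empty_iff]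
      intro A _
      tauto
  rw [Finset.card_filter, Fintype.sum_prod_type]
  have step1 : ∀ A : Finset (ZMod k),
      (∑ q : ZMod k × ZMod k, if (A.card = m ∧ q.1 ∉ A ∧ q.2 ∉ A ∧ q.1 ≠ q.2 ∧
        clockParent k A q.1 = clockParent k A q.2) then 1 else 0)
      = ∑ x : ZMod k, ∑ y : ZMod k, if (A.card = m ∧ x ∉ A ∧ y ∉ A ∧ x ≠ y ∧
        clockParent k A x = clockParent k A y) then 1 else 0 := by
    intro A; rw [Fintype.sum_prod_type]
  rw [Finset.sum_congr rfl (fun A _ => step1 A)]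
  rw [Finset.sum_comm]
  rw [Finset.sum_congr rfl (fun x _ => Finset.sum_comm)]
  have step2 : ∀ x : ZMod k,
      (∑ y : ZMod k, ∑ A : Finset (ZMod k), if (A.card = m ∧ x ∉ A ∧ y ∉ A ∧ x ≠ y ∧
        clockParent k A x = clockParent k A y) then 1 else 0)
      = 2 * Nat.choose (k - 1) (m + 1) := by
    intro x
    rw [Finset.sum_congr rfl (fun y _ => inner x y)]
    rw [← Finset.sum_filter]
    have step3 : ∀ y ∈ Finset.univ.filter (fun y : ZMod k => x ≠ y),
        Nat.choose ((y - x).val - 1) m + Nat.choose ((x - y).val - 1) m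
        = (fun d => Nat.choose (d - 1) m + Nat.choose (k - d - 1) m) ((y - x).val) := by
      intro y hy
      simp only [Finset.mem_filter, Finset.mem_univ, true_and] at hy
      simp only
      rw [val_sub_eq (Ne.symm hy).symm]
    rw [Finset.sum_congr rfl step3]
    exact (sum_over_y x _).trans (sum_arcs m (by omega))
  rw [Finset.sum_congr rfl (fun x _ => step2 x), Finset.sum_const, Finset.card_univ,
    ZMod.card, smul_eq_mul]

lemma den_count (m : ℕ) (hm : 2 ≤ m) (hk : m + 2 ≤ k) :
    ((Finset.univ : Finset (Finset (ZMod k) × ZMod k × ZMod k)).filter fun p =>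
        p.1.card = m ∧ p.2.1 ∉ p.1 ∧ p.2.2 ∉ p.1 ∧ p.2.1 ≠ p.2.2).card
      = Nat.choose k m * ((k - m) * (k - m - 1)) := by
  rw [Finset.card_filter, Fintype.sum_prod_type]
  have inner : ∀ A : Finset (ZMod k),
      (∑ q : ZMod k × ZMod k, if (A.card = m ∧ q.1 ∉ A ∧ q.2 ∉ A ∧ q.1 ≠ q.2) then 1 else 0)
      = if A.card = m then (k - m) * (k - m - 1) else 0 := by
    intro A
    by_cases hc : A.card = m
    · rw [if_pos hc]
      have : (∑ q : ZMod k × ZMod k, if (A.card = m ∧ q.1 ∉ A ∧ q.2 ∉ A ∧ q.1 ≠ q.2)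
          then 1 else 0) = ((Finset.univ : Finset (ZMod k × ZMod k)).filter fun q =>
          A.card = m ∧ q.1 ∉ A ∧ q.2 ∉ A ∧ q.1 ≠ q.2).card := (Finset.card_filter _ _).symm
      rw [this]
      have hset : ((Finset.univ : Finset (ZMod k × ZMod k)).filter fun q =>
          A.card = m ∧ q.1 ∉ A ∧ q.2 ∉ A ∧ q.1 ≠ q.2) = (Aᶜ).offDiag := by
        ext q
        simp only [Finset.mem_filter, Finset.mem_univ, true_and, Finset.mem_offDiag,
          Finset.mem_compl]
        tauto
      rw [hset, Finset.offDiag_card, Finset.card_compl, ZMod.card, hc]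
      have : ∀ n : ℕ, n * n - n = n * (n - 1) := by
        intro n
        cases n with
        | zero => simp
        | succ t => rw [Nat.mul_succ, Nat.add_sub_cancel, Nat.succ_sub_one]
      exact this _
    · rw [if_neg hc]
      apply Finset.sum_eq_zero
      intro q _
      rw [if_neg]
      tauto
  rw [Finset.sum_congr rfl (fun A _ => inner A), ← Finset.sum_filter,
    Finset.sum_const, smul_eq_mul]
  congr 1
  have : (Finset.univ.filter fun A : Finset (ZMod k) => A.card = m)
      = (Finset.univ : Finset (ZMod k)).powersetCard m := by
    ext A
    simp [Finset.mem_powersetCard, Finset.subset_univ]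
  rw [this, Finset.card_powersetCard, Finset.card_univ, ZMod.card]

/-- With m nonempty bins uniformly placed among k circular positions, two distinct
uniformly chosen empty positions have the same clockwise parent with probability 2/(m+1). -/
theorem same_clock_parent_prob (k m : ℕ) [NeZero k] (hm : 2 ≤ m) (hk : m + 2 ≤ k) :
    (((Finset.univ : Finset (Finset (ZMod k) × ZMod k × ZMod k)).filter fun p =>
        p.1.card = m ∧ p.2.1 ∉ p.1 ∧ p.2.2 ∉ p.1 ∧ p.2.1 ≠ p.2.2 ∧
        clockParent k p.1 p.2.1 = clockParent k p.1 p.2.2).card : ℝ) /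
      (((Finset.univ : Finset (Finset (ZMod k) × ZMod k × ZMod k)).filter fun p =>
        p.1.card = m ∧ p.2.1 ∉ p.1 ∧ p.2.2 ∉ p.1 ∧ p.2.1 ≠ p.2.2).card : ℝ) =
    2 / ((m : ℝ) + 1) := by
  rw [num_count m hm hk, den_count m hm hk]
  have key : k * (2 * Nat.choose (k - 1) (m + 1)) * (m + 1)
      = 2 * (Nat.choose k m * ((k - m) * (k - m - 1))) := by
    have h1 : Nat.choose (k - 1) (m + 1) * (m + 1)
        = Nat.choose (k - 1) m * (k - m - 1) := by
      have := Nat.choose_succ_right_eq (k - 1) m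
      rwa [show k - 1 - m = k - m - 1 by omega] at this
    have h2 : Nat.choose (k - 1) m * k = Nat.choose k m * (k - m) := by
      have := Nat.choose_mul_succ_eq (k - 1) m
      rwa [show k - 1 + 1 = k by omega, show k - m = k - m by rfl] at this
    calc k * (2 * Nat.choose (k - 1) (m + 1)) * (m + 1)
        = 2 * k * (Nat.choose (k - 1) (m + 1) * (m + 1)) := by ring
      _ = 2 * k * (Nat.choose (k - 1) m * (k - m - 1)) := by rw [h1]
      _ = 2 * (k - m - 1) * (Nat.choose (k - 1) m * k) := by ring
      _ = 2 * (k - m - 1) * (Nat.choose k m * (k - m)) := by rw [h2]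
      _ = 2 * (Nat.choose k m * ((k - m) * (k - m - 1))) := by ring
  have hD : ((Nat.choose k m * ((k - m) * (k - m - 1)) : ℕ) : ℝ) ≠ 0 := by
    have h1 : 0 < Nat.choose k m := Nat.choose_pos (by omega)
    have h2 : 0 < k - m := by omega
    have h3 : 0 < k - m - 1 := by omega
    have := Nat.mul_pos h1 (Nat.mul_pos h2 h3)
    exact Nat.cast_ne_zero.mpr (by omega)
  have hm1 : ((m : ℝ) + 1) ≠ 0 := by positivity
  rw [div_eq_div_iff hD hm1]
  exact_mod_cast key
end

section
/- In the setting of k circularly arranged bins with exactly m ≥ 2 nonempty bins uniformly placed, suppose each empty bin independently flips a fair coin to decide whether its 'parent' is the nearest nonempty bin in the clockwise or counterclockwise direction. Then for two distinct empty bins the probability that they have the same parent is 1.5/(m+1). -/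
/-!
Measure positions clockwise from a base point by `cwDist`. For an empty bin `i`, its clockwise
parent is the nonempty bin nearest to `i` in this order and its counterclockwise parent the
farthest one. Hence two distinct empty bins `i, j` choosing the same direction get the same
parent iff they lie in one gap, i.e. one of the two arcs between them is free of nonempty bins,
while the clockwise parent of `i` is the counterclockwise parent of `j` iff the clockwise arc
from `i` to `j` contains exactly one nonempty bin.

Both kinds of configurations `(A, i, j)` (with `i` before `j`) are in bijection with the pointed
sets `(B, i)`, `#B = m + 1`, `i ∉ B`, through `B = insert j A`: `j` is recovered as the first,
resp. second, point of `B` after `i`. With `N = C(k, m + 1) (k - m - 1)` such pointed sets, the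
four direction pairs contribute `2N + N + N + 2N = 6N` favourable cases out of
`4 C(k, m) (k - m) (k - m - 1) = 4 (m + 1) N`.
-/

open Finset
open scoped Classical

/-- The nearest nonempty bin (member of `A`) from position `i` in the direction given by
the bit `b`: clockwise (increasing index mod k) if `b = true`, counterclockwise otherwise. -/
noncomputable def dirParent (k : ℕ) (A : Finset (ZMod k)) (i : ZMod k) (b : Bool) : ZMod k :=
  if b then
    (if h : ∃ z : ℕ, 0 < z ∧ (i + (z : ZMod k)) ∈ A then i + ((Nat.find h : ℕ) : ZMod k) else i)
  else
    (if h : ∃ z : ℕ, 0 < z ∧ (i - (z : ZMod k)) ∈ A then i - ((Nat.find h : ℕ) : ZMod k) else i)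

namespace DirParent

variable {k : ℕ}

def cwDist (x y : ZMod k) : ℕ := (y - x).val

section cwDist

variable {x y z : ZMod k}

lemma cwDist_add_natCast {n : ℕ} (hn : n < k) : cwDist x (x + n) = n := by
  rw [cwDist, add_sub_cancel_left, ZMod.val_cast_of_lt hn]

lemma cwDist_self (x : ZMod k) : cwDist x x = 0 := by
  simp [cwDist]

lemma cwDist_eq_zero : cwDist x y = 0 ↔ x = y := by
  rw [cwDist, ZMod.val_eq_zero, sub_eq_zero, eq_comm]

lemma cwDist_pos : 0 < cwDist x y ↔ x ≠ y := by
  rw [Nat.pos_iff_ne_zero, Ne, cwDist_eq_zero]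

variable [NeZero k]

lemma cwDist_lt (x y : ZMod k) : cwDist x y < k := ZMod.val_lt _

lemma add_cwDist (x y : ZMod k) : x + (cwDist x y : ZMod k) = y := by
  rw [cwDist, ZMod.natCast_zmod_val, add_sub_cancel]

lemma cwDist_injective (x : ZMod k) : Function.Injective (cwDist x) := fun y z h => by
  rw [← add_cwDist x y, h, add_cwDist]

lemma cwDist_add_cwDist (x y z : ZMod k) :
    cwDist x y + cwDist y z = cwDist x z ∨ cwDist x y + cwDist y z = cwDist x z + k := by
  have hsum : z - x = (y - x) + (z - y) := by ring
  simp only [cwDist, hsum]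
  rcases lt_or_ge ((y - x).val + (z - y).val) k with h | h
  · exact .inl (ZMod.val_add_of_lt h).symm
  · exact .inr (ZMod.val_add_val_of_le h)

lemma cwDist_shift (x y z : ZMod k) :
    cwDist x y ≤ cwDist x z ∧ cwDist x y + cwDist y z = cwDist x z ∨
      cwDist x z < cwDist x y ∧ cwDist x y + cwDist y z = cwDist x z + k := by
  have := cwDist_lt y z
  rcases cwDist_add_cwDist x y z with h | h <;> omega

lemma cwDist_add_cwDist_swap (h : x ≠ y) : cwDist x y + cwDist y x = k := by
  have := cwDist_pos.mpr h
  have := cwDist_shift x y x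
  rw [cwDist_self] at this
  omega

end cwDist

def ArcFree (A : Finset (ZMod k)) (i j : ZMod k) : Prop :=
  ∀ x ∈ A, cwDist i j < cwDist i x

def OneOnArc (A : Finset (ZMod k)) (i j : ZMod k) : Prop :=
  ∃ s ∈ A, cwDist i s < cwDist i j ∧ ArcFree (A.erase s) i j

section spec

variable [NeZero k] {A : Finset (ZMod k)} {i a : ZMod k}

lemma dirParent_true_spec (hA : A.Nonempty) (hi : i ∉ A) :
    dirParent k A i true ∈ A ∧ ∀ x ∈ A, cwDist i (dirParent k A i true) ≤ cwDist i x := by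
  obtain ⟨c, hc⟩ := hA
  have hex : ∃ z : ℕ, 0 < z ∧ i + (z : ZMod k) ∈ A :=
    ⟨cwDist i c, cwDist_pos.mpr (ne_of_mem_of_not_mem hc hi).symm, by rwa [add_cwDist]⟩
  have hmin : ∀ x ∈ A, Nat.find hex ≤ cwDist i x := fun x hx =>
    Nat.find_min' hex ⟨cwDist_pos.mpr (ne_of_mem_of_not_mem hx hi).symm, by rwa [add_cwDist]⟩
  have hdist := cwDist_add_natCast (x := i) ((hmin c hc).trans_lt (cwDist_lt i c))
  simp only [dirParent, if_true, dif_pos hex, hdist]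
  exact ⟨(Nat.find_spec hex).2, hmin⟩

-- The point closest to `i` counterclockwise is the farthest one clockwise.
lemma dirParent_false_spec (hA : A.Nonempty) (hi : i ∉ A) :
    dirParent k A i false ∈ A ∧
      ∀ x ∈ A, cwDist i x ≤ cwDist i (dirParent k A i false) := by
  obtain ⟨c, hc⟩ := hA
  have hsub : ∀ x, i - (cwDist x i : ZMod k) = x := fun x => by
    rw [sub_eq_iff_eq_add, add_cwDist]
  have hex : ∃ z : ℕ, 0 < z ∧ i - (z : ZMod k) ∈ A :=
    ⟨cwDist c i, cwDist_pos.mpr (ne_of_mem_of_not_mem hc hi), by rwa [hsub]⟩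
  have hmin : ∀ x ∈ A, Nat.find hex ≤ cwDist x i := fun x hx =>
    Nat.find_min' hex ⟨cwDist_pos.mpr (ne_of_mem_of_not_mem hx hi), by rwa [hsub]⟩
  simp only [dirParent, Bool.false_eq_true, if_false, dif_pos hex]
  set n := Nat.find hex
  have hn : 0 < n := (Nat.find_spec hex).1
  have hnk : n < k := (hmin c hc).trans_lt (cwDist_lt c i)
  have hdist : cwDist (i - (n : ZMod k)) i = n := by
    rw [cwDist, sub_sub_cancel, ZMod.val_cast_of_lt hnk]
  have hni := cwDist_add_cwDist_swap (x := i) (y := i - (n : ZMod k)) fun h => by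
    rw [← h, cwDist_self] at hdist
    omega
  refine ⟨(Nat.find_spec hex).2, fun x hx => ?_⟩
  have hxi := cwDist_add_cwDist_swap (ne_of_mem_of_not_mem hx hi).symm
  have := hmin x hx
  omega

lemma dirParent_true_eq_iff (hA : A.Nonempty) (hi : i ∉ A) :
    dirParent k A i true = a ↔ a ∈ A ∧ ∀ x ∈ A, cwDist i a ≤ cwDist i x := by
  obtain ⟨hmem, hmin⟩ := dirParent_true_spec hA hi
  refine ⟨by rintro rfl; exact ⟨hmem, hmin⟩, fun ⟨ha, h⟩ => ?_⟩
  exact cwDist_injective i ((hmin a ha).antisymm (h _ hmem))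

lemma dirParent_false_eq_iff (hA : A.Nonempty) (hi : i ∉ A) :
    dirParent k A i false = a ↔ a ∈ A ∧ ∀ x ∈ A, cwDist i x ≤ cwDist i a := by
  obtain ⟨hmem, hmax⟩ := dirParent_false_spec hA hi
  refine ⟨by rintro rfl; exact ⟨hmem, hmax⟩, fun ⟨ha, h⟩ => ?_⟩
  exact cwDist_injective i ((h _ hmem).antisymm (hmax a ha))

end spec

section gaps

variable [NeZero k] {A : Finset (ZMod k)} {i j : ZMod k}

lemma arcFree_comm_iff (hi : i ∉ A) (hij : i ≠ j) :
    ArcFree A j i ↔ ∀ x ∈ A, cwDist i x < cwDist i j := by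
  refine forall₂_congr fun x hx => ?_
  have := cwDist_pos.mpr (ne_of_mem_of_not_mem hx hi).symm
  have := cwDist_add_cwDist_swap hij
  have := cwDist_lt j x
  have := cwDist_lt i x
  have := cwDist_shift i j x
  omega

lemma dirParent_true_eq_true_iff (hA : A.Nonempty) (hi : i ∉ A) (hj : j ∉ A) (hij : i ≠ j) :
    dirParent k A i true = dirParent k A j true ↔ ArcFree A i j ∨ ArcFree A j i := by
  rw [arcFree_comm_iff hi hij, eq_comm, dirParent_true_eq_iff hA hj]
  unfold ArcFree
  obtain ⟨ha, hmin⟩ := dirParent_true_spec hA hi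
  have hne : ∀ x ∈ A, cwDist i x ≠ cwDist i j := fun x hx =>
    (cwDist_injective i).ne (ne_of_mem_of_not_mem hx hj)
  have := cwDist_shift i j (dirParent k A i true)
  have := cwDist_lt i (dirParent k A i true)
  constructor
  · rintro ⟨-, hminj⟩
    by_contra! hcross
    obtain ⟨⟨x, hx, hxj⟩, y, hy, hyj⟩ := hcross
    have := hmin x hx
    have := hminj y hy
    have := hne x hx
    have := cwDist_shift i j y
    have := cwDist_lt i y
    omega
  · intro hgap
    refine ⟨ha, fun x hx => ?_⟩
    have := hmin x hx
    have := cwDist_shift i j x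
    rcases hgap with h | h <;> have := h x hx <;> have := h _ ha <;> omega

lemma dirParent_false_eq_false_iff (hA : A.Nonempty) (hi : i ∉ A) (hj : j ∉ A) (hij : i ≠ j) :
    dirParent k A i false = dirParent k A j false ↔ ArcFree A i j ∨ ArcFree A j i := by
  rw [arcFree_comm_iff hi hij, eq_comm, dirParent_false_eq_iff hA hj]
  unfold ArcFree
  obtain ⟨ha, hmax⟩ := dirParent_false_spec hA hi
  have hne : ∀ x ∈ A, cwDist i x ≠ cwDist i j := fun x hx =>
    (cwDist_injective i).ne (ne_of_mem_of_not_mem hx hj)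
  have := cwDist_shift i j (dirParent k A i false)
  have := cwDist_lt i (dirParent k A i false)
  constructor
  · rintro ⟨-, hmaxj⟩
    by_contra! hcross
    obtain ⟨⟨x, hx, hxj⟩, y, hy, hyj⟩ := hcross
    have := hmax y hy
    have := hmaxj x hx
    have := hne x hx
    have := hne _ ha
    have := cwDist_shift i j x
    omega
  · intro hgap
    refine ⟨ha, fun x hx => ?_⟩
    have := hmax x hx
    have := cwDist_shift i j x
    rcases hgap with h | h <;> have := h x hx <;> have := h _ ha <;> omega

lemma dirParent_true_eq_false_iff (hA : 1 < A.card) (hi : i ∉ A) (hj : j ∉ A) :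
    dirParent k A i true = dirParent k A j false ↔ OneOnArc A i j := by
  have hA' : A.Nonempty := card_pos.mp (by omega)
  have hne : ∀ x ∈ A, cwDist i x ≠ cwDist i j := fun x hx =>
    (cwDist_injective i).ne (ne_of_mem_of_not_mem hx hj)
  constructor
  · intro h
    obtain ⟨hs, hmin⟩ := dirParent_true_spec hA' hi
    set s := dirParent k A i true
    obtain ⟨-, hmaxj⟩ := (dirParent_false_eq_iff hA' hj).mp h.symm
    have hlt : ∀ x ∈ A, x ≠ s → cwDist i s < cwDist i x := fun x hx hxs =>
      (hmin x hx).lt_of_ne ((cwDist_injective i).ne hxs.symm)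
    have := cwDist_shift i j s
    have := hne s hs
    have hsj : cwDist i s < cwDist i j := by
      obtain ⟨x, hx, hxs⟩ := exists_mem_ne hA s
      have := hlt x hx hxs
      have := hmaxj x hx
      have := cwDist_shift i j x
      omega
    refine ⟨s, hs, hsj, fun x hx => ?_⟩
    obtain ⟨hxs, hx⟩ := mem_erase.mp hx
    have := hlt x hx hxs
    have := hmaxj x hx
    have := hne x hx
    have := cwDist_shift i j x
    have := cwDist_lt i x
    omega
  · rintro ⟨s, hs, hsj, hfree⟩
    have hfar : ∀ x ∈ A, x ≠ s → cwDist i j < cwDist i x := fun x hx hxs =>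
      hfree x (mem_erase.mpr ⟨hxs, hx⟩)
    have hnext : dirParent k A i true = s := by
      refine (dirParent_true_eq_iff hA' hi).mpr ⟨hs, fun x hx => ?_⟩
      rcases eq_or_ne x s with rfl | hxs
      · exact le_rfl
      · exact (hsj.trans (hfar x hx hxs)).le
    have hprev : dirParent k A j false = s := by
      refine (dirParent_false_eq_iff hA' hj).mpr ⟨hs, fun x hx => ?_⟩
      rcases eq_or_ne x s with rfl | hxs
      · exact le_rfl
      have := hfar x hx hxs
      have := cwDist_shift i j x
      have := cwDist_shift i j s
      have := cwDist_lt i x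
      omega
    rw [hnext, hprev]

lemma ArcFree.not_swap (hA : A.Nonempty) (hi : i ∉ A) (hij : i ≠ j) (h : ArcFree A i j) :
    ¬ArcFree A j i := by
  rw [arcFree_comm_iff hi hij]
  obtain ⟨x, hx⟩ := hA
  exact fun h' => lt_asymm (h x hx) (h' x hx)

lemma dirParent_eq_dirParent_iff (b : Bool) (hA : A.Nonempty) (hi : i ∉ A) (hj : j ∉ A)
    (hij : i ≠ j) :
    dirParent k A i b = dirParent k A j b ↔ ArcFree A i j ∨ ArcFree A j i := by
  cases b
  · exact dirParent_false_eq_false_iff hA hi hj hij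
  · exact dirParent_true_eq_true_iff hA hi hj hij

lemma dirParent_false_eq_true_iff (hA : 1 < A.card) (hi : i ∉ A) (hj : j ∉ A) :
    dirParent k A i false = dirParent k A j true ↔ OneOnArc A j i := by
  rw [eq_comm, dirParent_true_eq_false_iff hA hj hi]

lemma dirParent_insert_eq_of_arcFree (hi : i ∉ A) (hij : i ≠ j) (h : ArcFree A i j) :
    dirParent k (insert j A) i true = j := by
  refine (dirParent_true_eq_iff (insert_nonempty j A) (by simp [hi, hij])).mpr
    ⟨mem_insert_self j A, ?_⟩
  simp only [forall_mem_insert, le_rfl, true_and]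
  exact fun x hx => (h x hx).le

lemma arcFree_erase_dirParent (hA : A.Nonempty) (hi : i ∉ A) :
    ArcFree (A.erase (dirParent k A i true)) i (dirParent k A i true) := fun x hx => by
  obtain ⟨hxs, hx⟩ := mem_erase.mp hx
  exact ((dirParent_true_spec hA hi).2 x hx).lt_of_ne ((cwDist_injective i).ne hxs.symm)

end gaps

section counting

lemma card_filter_card_eq_and_mem {α β : Type*} [Fintype α] [Fintype β] (m : ℕ)
    (t : Finset α → Finset β) {c : ℕ}
    (ht : ∀ A : Finset α, A.card = m → (t A).card = c) :
    #{p : Finset α × β | p.1.card = m ∧ p.2 ∈ t p.1} = (Fintype.card α).choose m * c := by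
  rw [card_equiv (Equiv.sigmaEquivProd _ _).symm (t := (powersetCard m univ).sigma t)
      (fun p => by simp), card_sigma, sum_congr rfl fun A hA => ht A (mem_powersetCard.mp hA).2,
    sum_const, card_powersetCard, card_univ, smul_eq_mul]

lemma card_filter_bool_bool {α β γ : Type*} [Fintype α] [Fintype β] [Fintype γ]
    (P : α × β × γ → Bool → Bool → Prop) [∀ q b₁ b₂, Decidable (P q b₁ b₂)] :
    #{p : α × β × γ × Bool × Bool | P (p.1, p.2.1, p.2.2.1) p.2.2.2.1 p.2.2.2.2} =
      #{q | P q true true} + #{q | P q true false} + #{q | P q false true} +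
        #{q | P q false false} := by
  simp only [card_filter, Fintype.sum_prod_type, Fintype.sum_bool, sum_add_distrib]
  ring

variable [NeZero k]

def pointed (k m : ℕ) [NeZero k] : Finset (Finset (ZMod k) × ZMod k) :=
  {p | p.1.card = m ∧ p.2 ∉ p.1}

lemma card_pointed (m : ℕ) : #(pointed k m) = k.choose m * (k - m) := by
  have h := card_filter_card_eq_and_mem (α := ZMod k) m compl fun A hA => by
    rw [card_compl, ZMod.card, hA]
  simp only [mem_compl, ZMod.card] at h
  exact h

lemma card_distinct_pairs_outside (m : ℕ) :
    #{q : Finset (ZMod k) × ZMod k × ZMod k |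
        q.1.card = m ∧ q.2.1 ∉ q.1 ∧ q.2.2 ∉ q.1 ∧ q.2.1 ≠ q.2.2} =
      k.choose m * ((k - m) * (k - m) - (k - m)) := by
  have h := card_filter_card_eq_and_mem (α := ZMod k) (β := ZMod k × ZMod k) m
    (fun A => Aᶜ.offDiag) fun A hA => by rw [offDiag_card, card_compl, ZMod.card, hA]
  simp only [mem_offDiag, mem_compl, ZMod.card] at h
  exact h

-- Reducible, so that the cardinality lemmas below rewrite the filters of the main statement.
abbrev configs (m : ℕ) (R : Finset (ZMod k) → ZMod k → ZMod k → Prop)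
    [∀ A i j, Decidable (R A i j)] : Finset (Finset (ZMod k) × ZMod k × ZMod k) :=
  {q | q.1.card = m ∧ q.2.1 ∉ q.1 ∧ q.2.2 ∉ q.1 ∧ q.2.1 ≠ q.2.2 ∧ R q.1 q.2.1 q.2.2}

variable {m : ℕ}

lemma mem_configs {R : Finset (ZMod k) → ZMod k → ZMod k → Prop}
    [∀ A i j, Decidable (R A i j)]
    {A : Finset (ZMod k)} {i j : ZMod k} :
    (A, i, j) ∈ configs m R ↔ A.card = m ∧ i ∉ A ∧ j ∉ A ∧ i ≠ j ∧ R A i j := by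
  simp [configs]

lemma configs_congr {R S : Finset (ZMod k) → ZMod k → ZMod k → Prop}
    [∀ A i j, Decidable (R A i j)] [∀ A i j, Decidable (S A i j)]
    (h : ∀ A i j, A.card = m → i ∉ A → j ∉ A → i ≠ j → (R A i j ↔ S A i j)) :
    configs m R = configs m S := by
  ext ⟨A, i, j⟩
  simp only [mem_configs]
  exact ⟨fun ⟨hA, hi, hj, hij, hR⟩ => ⟨hA, hi, hj, hij, (h A i j hA hi hj hij).mp hR⟩,
    fun ⟨hA, hi, hj, hij, hS⟩ => ⟨hA, hi, hj, hij, (h A i j hA hi hj hij).mpr hS⟩⟩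

lemma card_configs_swap (R : Finset (ZMod k) → ZMod k → ZMod k → Prop)
    [∀ A i j, Decidable (R A i j)] :
    #(configs m fun A i j => R A j i) = #(configs m R) :=
  card_equiv ((Equiv.refl _).prodCongr (Equiv.prodComm _ _)) fun ⟨A, i, j⟩ => by
    simp only [Equiv.prodCongr_apply, Equiv.coe_refl, Equiv.prodComm_apply, Prod.map, id_eq,
      Prod.swap_prod_mk, mem_configs, ne_comm]
    tauto

lemma card_configs_arcFree :
    #(configs m (ArcFree (k := k))) = #(pointed k (m + 1)) := by
  refine card_nbij' (fun q => (insert q.2.2 q.1, q.2.1))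
    (fun p => (p.1.erase (dirParent k p.1 p.2 true), p.2, dirParent k p.1 p.2 true))
    ?_ ?_ ?_ ?_ <;> simp only [Set.MapsTo, Set.LeftInvOn, coe_filter, mem_univ, true_and,
      Set.mem_ofPred_eq, Prod.forall, configs, pointed]
  · rintro A i j ⟨hA, hi, hj, hij, -⟩
    exact ⟨by rw [card_insert_of_notMem hj, hA], by simp [hi, hij]⟩
  · rintro B i ⟨hB, hi⟩
    have hne : B.Nonempty := card_pos.mp (by omega)
    have hs := (dirParent_true_spec hne hi).1
    exact ⟨by rw [card_erase_of_mem hs, hB, Nat.add_sub_cancel], fun h => hi (mem_of_mem_erase h),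
      notMem_erase _ _, (ne_of_mem_of_not_mem hs hi).symm, arcFree_erase_dirParent hne hi⟩
  · rintro A i j ⟨-, hi, hj, hij, hfree⟩
    rw [dirParent_insert_eq_of_arcFree hi hij hfree, erase_insert hj]
  · rintro B i ⟨hB, hi⟩
    rw [insert_erase (dirParent_true_spec (card_pos.mp (by omega)) hi).1]

lemma card_configs_oneOnArc (hm : 1 ≤ m) :
    #(configs m (OneOnArc (k := k))) =
      #(pointed k (m + 1)) := by
  refine card_nbij' (fun q => (insert q.2.2 q.1, q.2.1))
    (fun p => (p.1.erase (dirParent k (p.1.erase (dirParent k p.1 p.2 true)) p.2 true), p.2,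
      dirParent k (p.1.erase (dirParent k p.1 p.2 true)) p.2 true))
    ?_ ?_ ?_ ?_ <;> simp only [Set.MapsTo, Set.LeftInvOn, coe_filter, mem_univ, true_and,
      Set.mem_ofPred_eq, Prod.forall, configs, pointed]
  · rintro A i j ⟨hA, hi, hj, hij, -⟩
    exact ⟨by rw [card_insert_of_notMem hj, hA], by simp [hi, hij]⟩
  · rintro B i ⟨hB, hi⟩
    have hne : B.Nonempty := card_pos.mp (by omega)
    obtain ⟨hs, hmin⟩ := dirParent_true_spec hne hi
    set s := dirParent k B i true
    have hne' : (B.erase s).Nonempty := card_pos.mp (by rw [card_erase_of_mem hs]; omega)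
    have hi' : i ∉ B.erase s := fun h => hi (mem_of_mem_erase h)
    have hj := (dirParent_true_spec hne' hi').1
    set j := dirParent k (B.erase s) i true
    obtain ⟨hjs, hjB⟩ := mem_erase.mp hj
    refine ⟨by rw [card_erase_of_mem hjB, hB, Nat.add_sub_cancel],
      fun h => hi (mem_of_mem_erase h), notMem_erase _ _, (ne_of_mem_of_not_mem hjB hi).symm,
      s, mem_erase.mpr ⟨hjs.symm, hs⟩,
      (hmin j hjB).lt_of_ne ((cwDist_injective i).ne hjs.symm), ?_⟩
    rw [erase_right_comm]
    exact arcFree_erase_dirParent hne' hi'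
  · rintro A i j ⟨-, hi, hj, hij, s, hs, hsj, hfree⟩
    have hjs : j ≠ s := (ne_of_mem_of_not_mem hs hj).symm
    have hnext : dirParent k (insert j A) i true = s := by
      refine (dirParent_true_eq_iff (insert_nonempty j A) (by simp [hi, hij])).mpr
        ⟨mem_insert_of_mem hs, ?_⟩
      simp only [forall_mem_insert]
      refine ⟨hsj.le, fun x hx => ?_⟩
      rcases eq_or_ne x s with rfl | hxs
      · exact le_rfl
      · exact (hsj.trans (hfree x (mem_erase.mpr ⟨hxs, hx⟩))).le
    rw [hnext, erase_insert_of_ne hjs,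
      dirParent_insert_eq_of_arcFree (fun h => hi (mem_of_mem_erase h)) hij hfree,
      erase_insert hj]
  · rintro B i ⟨hB, hi⟩
    have hne : B.Nonempty := card_pos.mp (by omega)
    have hne' : (B.erase (dirParent k B i true)).Nonempty := card_pos.mp (by
      rw [card_erase_of_mem (dirParent_true_spec hne hi).1]; omega)
    rw [insert_erase (mem_of_mem_erase (dirParent_true_spec hne'
      fun h => hi (mem_of_mem_erase h)).1)]

lemma configs_or (R S : Finset (ZMod k) → ZMod k → ZMod k → Prop)
    [∀ A i j, Decidable (R A i j)] [∀ A i j, Decidable (S A i j)] :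
    configs m (fun A i j => R A i j ∨ S A i j) = configs m R ∪ configs m S := by
  ext ⟨A, i, j⟩
  simp only [mem_union, mem_configs]
  tauto

lemma card_configs_same_dir (b : Bool) (hm : 1 ≤ m) :
    #(configs m fun A i j => dirParent k A i b = dirParent k A j b) =
      2 * #(pointed k (m + 1)) := by
  have hdisj : Disjoint (configs m (ArcFree (k := k))) (configs m fun A i j => ArcFree A j i) :=
    disjoint_left.mpr fun ⟨A, i, j⟩ h₁ h₂ => by
      obtain ⟨hA, hi, -, hij, hfree⟩ := mem_configs.mp h₁
      exact hfree.not_swap (card_pos.mp (by omega)) hi hij (mem_configs.mp h₂).2.2.2.2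
  rw [configs_congr fun A i j hA hi hj hij =>
      dirParent_eq_dirParent_iff b (card_pos.mp (by omega)) hi hj hij,
    configs_or, card_union_of_disjoint hdisj, card_configs_swap (R := ArcFree),
    card_configs_arcFree, two_mul]

lemma card_configs_true_false (hm : 2 ≤ m) :
    #(configs m fun A i j => dirParent k A i true = dirParent k A j false) =
      #(pointed k (m + 1)) := by
  rw [configs_congr fun A i j hA hi hj _ => dirParent_true_eq_false_iff (by omega) hi hj]
  exact card_configs_oneOnArc (by omega)

lemma card_configs_false_true (hm : 2 ≤ m) :
    #(configs m fun A i j => dirParent k A i false = dirParent k A j true) =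
      #(pointed k (m + 1)) := by
  rw [configs_congr fun A i j hA hi hj _ => dirParent_false_eq_true_iff (by omega) hi hj,
    card_configs_swap (R := OneOnArc)]
  exact card_configs_oneOnArc (by omega)

end counting

end DirParent

open DirParent in
/-- With m nonempty bins uniformly placed among k circular positions and each empty bin
choosing its direction by an independent fair coin, two distinct uniformly chosen empty
positions have the same parent with probability 1.5/(m+1). -/
theorem same_random_dir_parent_prob (k m : ℕ) [NeZero k] (hm : 2 ≤ m) (hk : m + 2 ≤ k) :
    (((Finset.univ : Finset (Finset (ZMod k) × ZMod k × ZMod k × Bool × Bool)).filter fun p =>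
        p.1.card = m ∧ p.2.1 ∉ p.1 ∧ p.2.2.1 ∉ p.1 ∧ p.2.1 ≠ p.2.2.1 ∧
        dirParent k p.1 p.2.1 p.2.2.2.1 = dirParent k p.1 p.2.2.1 p.2.2.2.2).card : ℝ) /
      (((Finset.univ : Finset (Finset (ZMod k) × ZMod k × ZMod k × Bool × Bool)).filter fun p =>
        p.1.card = m ∧ p.2.1 ∉ p.1 ∧ p.2.2.1 ∉ p.1 ∧ p.2.1 ≠ p.2.2.1).card : ℝ) =
    1.5 / ((m : ℝ) + 1) := by
  rw [card_filter_bool_bool (fun q b₁ b₂ => q.1.card = m ∧ q.2.1 ∉ q.1 ∧ q.2.2 ∉ q.1 ∧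
      q.2.1 ≠ q.2.2 ∧ dirParent k q.1 q.2.1 b₁ = dirParent k q.1 q.2.2 b₂),
    card_filter_bool_bool (fun (q : Finset (ZMod k) × ZMod k × ZMod k) (_ _ : Bool) =>
      q.1.card = m ∧ q.2.1 ∉ q.1 ∧ q.2.2 ∉ q.1 ∧ q.2.1 ≠ q.2.2),
    card_configs_same_dir true (by omega), card_configs_true_false hm,
    card_configs_false_true hm, card_configs_same_dir false (by omega),
    card_distinct_pairs_outside, card_pointed]
  have hN : 0 < k.choose (m + 1) * (k - (m + 1)) :=
    Nat.mul_pos (Nat.choose_pos (by omega)) (by omega)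
  have hC : k.choose m * ((k - m) * (k - m) - (k - m)) =
      (m + 1) * (k.choose (m + 1) * (k - (m + 1))) := by
    rw [← Nat.mul_sub_one, ← mul_assoc, ← Nat.choose_succ_right_eq, Nat.sub_sub]
    ring
  rw [hC]
  generalize k.choose (m + 1) * (k - (m + 1)) = N at hN ⊢
  push_cast
  field_simp
  norm_num
end

section
/- Let k ≥ 1 and let N be a random variable taking values in {0,1,...,k−1}. Define Var₁ = R/k + (2/k)·E[N/(k−N+1)]·R + ((k+1)/k)·E[(k−N−1)/(k−N+1)]·R·R̃ − R² and Var₂ = R/k + (1/k²)·E[N(4k−N+1)/(2(k−N+1))]·R + (1/k²)·E[(2k³+N²−N(2k²+2k+1)−2k)/(2(k−N+1))]·R·R̃ − R², where 0 ≤ R̃ ≤ R ≤ 1. Then Var₁ − Var₂ = E[ N(N−1)/(2k²(k−N+1)) ] · (R − R·R̃), and in particular Var₂ ≤ Var₁. -/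
open Finset

/-- The variance of the old densified estimator (Theorem 2 of the paper), as a function of
the distribution of N = N_emp encoded by weights `w`. -/
noncomputable def Var1 {Ω : Type*} [Fintype Ω] (k : ℕ) (w : Ω → ℝ) (N : Ω → ℕ) (R Rt : ℝ) : ℝ :=
  R / k + (2 / (k : ℝ)) * (∑ ω, w ω * ((N ω : ℝ) / ((k : ℝ) - (N ω : ℝ) + 1))) * R
    + (((k : ℝ) + 1) / k) *
        (∑ ω, w ω * (((k : ℝ) - (N ω : ℝ) - 1) / ((k : ℝ) - (N ω : ℝ) + 1))) * R * Rt
    - R ^ 2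

/-- The variance of the improved densified estimator (Theorem 4 of the paper). -/
noncomputable def Var2 {Ω : Type*} [Fintype Ω] (k : ℕ) (w : Ω → ℝ) (N : Ω → ℕ) (R Rt : ℝ) : ℝ :=
  R / k + (1 / (k : ℝ) ^ 2) *
      (∑ ω, w ω * ((N ω : ℝ) * (4 * (k : ℝ) - (N ω : ℝ) + 1) /
        (2 * ((k : ℝ) - (N ω : ℝ) + 1)))) * R
    + (1 / (k : ℝ) ^ 2) *
      (∑ ω, w ω * ((2 * (k : ℝ) ^ 3 + (N ω : ℝ) ^ 2 - (N ω : ℝ) * (2 * (k : ℝ) ^ 2 + 2 * (k : ℝ) + 1)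
        - 2 * (k : ℝ)) / (2 * ((k : ℝ) - (N ω : ℝ) + 1)))) * R * Rt
    - R ^ 2

/-- Theorem 5 of the paper: Var(R̂) − Var(R̂⁺) = E[N(N−1)/(2k²(k−N+1))]·(R − RR̃),
hence Var(R̂⁺) ≤ Var(R̂). -/
theorem variance_difference {Ω : Type*} [Fintype Ω] (k : ℕ) (hk : 1 ≤ k)
    (w : Ω → ℝ) (hw : ∀ ω, 0 ≤ w ω) (hsum : ∑ ω, w ω = 1)
    (N : Ω → ℕ) (hN : ∀ ω, N ω ≤ k - 1)
    (R Rt : ℝ) (h0 : 0 ≤ Rt) (h1 : Rt ≤ R) (h2 : R ≤ 1) :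
    Var1 k w N R Rt - Var2 k w N R Rt =
      (∑ ω, w ω * ((N ω : ℝ) * ((N ω : ℝ) - 1) /
        (2 * (k : ℝ) ^ 2 * ((k : ℝ) - (N ω : ℝ) + 1)))) * (R - R * Rt) ∧
    Var2 k w N R Rt ≤ Var1 k w N R Rt := by

  have hk0 : (k : ℝ) ≠ 0 := Nat.cast_ne_zero.mpr (by omega)
  have hd : ∀ ω, (0:ℝ) < (k : ℝ) - (N ω : ℝ) + 1 := by
    intro ω
    have h := hN ω
    have h' : (N ω : ℝ) ≤ ((k - 1 : ℕ) : ℝ) := Nat.cast_le.mpr h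
    rw [Nat.cast_sub hk, Nat.cast_one] at h'
    linarith
  have point : ∀ ω : Ω,
      w ω * ((N ω : ℝ) * ((N ω : ℝ) - 1) /
        (2 * (k : ℝ) ^ 2 * ((k : ℝ) - (N ω : ℝ) + 1))) * (R - R * Rt) =
      (2 / (k : ℝ)) * (w ω * ((N ω : ℝ) / ((k : ℝ) - (N ω : ℝ) + 1))) * R
      + (((k : ℝ) + 1) / k) * (w ω * (((k : ℝ) - (N ω : ℝ) - 1) / ((k : ℝ) - (N ω : ℝ) + 1))) * R * Rt
      - (1 / (k : ℝ) ^ 2) * (w ω * ((N ω : ℝ) * (4 * (k : ℝ) - (N ω : ℝ) + 1) /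
          (2 * ((k : ℝ) - (N ω : ℝ) + 1)))) * R
      - (1 / (k : ℝ) ^ 2) * (w ω * ((2 * (k : ℝ) ^ 3 + (N ω : ℝ) ^ 2 - (N ω : ℝ) * (2 * (k : ℝ) ^ 2 + 2 * (k : ℝ) + 1)
          - 2 * (k : ℝ)) / (2 * ((k : ℝ) - (N ω : ℝ) + 1)))) * R * Rt := by
    intro ω
    have hdo := (hd ω).ne'
    field_simp
    ring
  have main : Var1 k w N R Rt - Var2 k w N R Rt =
      (∑ ω, w ω * ((N ω : ℝ) * ((N ω : ℝ) - 1) /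
        (2 * (k : ℝ) ^ 2 * ((k : ℝ) - (N ω : ℝ) + 1)))) * (R - R * Rt) := by
    rw [Finset.sum_mul]
    simp only [point]
    simp only [Finset.sum_sub_distrib, Finset.sum_add_distrib, ← Finset.sum_mul, ← Finset.mul_sum]
    unfold Var1 Var2
    ring
  refine ⟨main, ?_⟩
  have hnn : 0 ≤ (∑ ω, w ω * ((N ω : ℝ) * ((N ω : ℝ) - 1) /
      (2 * (k : ℝ) ^ 2 * ((k : ℝ) - (N ω : ℝ) + 1)))) * (R - R * Rt) := by
    apply mul_nonneg
    · apply Finset.sum_nonneg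
      intro ω _
      apply mul_nonneg (hw ω)
      apply div_nonneg
      · rcases Nat.eq_zero_or_pos (N ω) with h | h
        · simp [h]
        · have : (1:ℝ) ≤ (N ω : ℝ) := Nat.one_le_cast.mpr h
          nlinarith
      · have := hd ω
        positivity
    · nlinarith
  linarith [main]
end

section
/- Consider the sampling-without-replacement model where n distinct items from a universe of size D are placed by a random permutation into k bins of size D/k each. Then the probability that exactly i bins are empty is P_i = ∑_{s=0}^{k−i} ((−1)^s k!)/(i! s! (k−i−s)!) · ∏_{t=0}^{n−1} (D(1−(i+s)/k) − t)/(D − t). -/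
open Finset

-- fiber count: permutations agreeing with an injective g on S
lemma fiber_count {D : ℕ} (S : Finset (Fin D)) (g : {x // x ∈ S} → Fin D)
    (hg : Function.Injective g) :
    (univ.filter fun π : Equiv.Perm (Fin D) => ∀ x : {x // x ∈ S}, π ↑x = g x).card
      = Nat.factorial (D - S.card) := by
  classical
  -- the stabilizer
  set K := univ.filter fun σ : Equiv.Perm (Fin D) => ∀ x : {x // x ∈ S}, σ ↑x = ↑x with hK
  have hKcard : K.card = Nat.factorial (D - S.card) := by
    have h1 : K.card = Fintype.card {σ : Equiv.Perm (Fin D) // ∀ a, ¬ (a ∉ S) → σ a = a} := by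
      rw [Fintype.card_subtype]
      apply Finset.card_bij (fun σ _ => σ)
      · intro σ hσ
        simp only [hK, mem_filter, mem_univ, true_and] at hσ
        simp only [mem_filter, mem_univ, true_and]
        exact fun a ha => hσ ⟨a, not_not.mp ha⟩
      · intro _ _ _ _ h; exact h
      · intro σ hσ
        simp only [mem_filter, mem_univ, true_and] at hσ
        refine ⟨σ, ?_, rfl⟩
        simp only [hK, mem_filter, mem_univ, true_and]
        exact fun x => hσ ↑x (fun h => h x.2)
    rw [h1, ← Fintype.card_congr (Equiv.Perm.subtypeEquivSubtypePerm (fun a => a ∉ S)),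
      Fintype.card_perm, Fintype.card_subtype_compl, Fintype.card_coe, Fintype.card_fin]
  -- get a permutation extending g
  have : ∃ π₀ : Equiv.Perm (Fin D), ∀ x : {x // x ∈ S}, π₀ ↑x = g x := by
    let e : {x // x ∈ S} ≃ {y // y ∈ Set.range g} := Equiv.ofInjective g hg
    refine ⟨e.extendSubtype, fun x => ?_⟩
    rw [Equiv.extendSubtype_apply_of_mem e ↑x x.2]
    simp [e, Equiv.ofInjective]
  obtain ⟨π₀, hπ₀⟩ := this
  rw [← hKcard]
  apply Finset.card_bij (fun π _ => π₀⁻¹ * π)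
  · intro π hπ
    simp only [hK, mem_filter, mem_univ, true_and] at hπ ⊢
    intro x
    simp [Equiv.Perm.mul_apply, hπ x, ← hπ₀ x]
  · intro a ha b hb h
    exact mul_left_cancel h
  · intro σ hσ
    refine ⟨π₀ * σ, ?_, by group⟩
    simp only [hK, mem_filter, mem_univ, true_and] at hσ ⊢
    intro x
    simp [Equiv.Perm.mul_apply, hσ x, hπ₀ x]


lemma count_perm_into {D : ℕ} (S A : Finset (Fin D)) :
    (univ.filter fun π : Equiv.Perm (Fin D) => ∀ x ∈ S, π x ∈ A).card
      = A.card.descFactorial S.card * Nat.factorial (D - S.card) := by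
  classical
  set t : Finset ({x // x ∈ S} → Fin D) :=
    univ.filter fun g => Function.Injective g ∧ ∀ x : {x // x ∈ S}, g x ∈ A with ht
  have hmap : ∀ π ∈ (univ.filter fun π : Equiv.Perm (Fin D) => ∀ x ∈ S, π x ∈ A),
      (fun x : {x // x ∈ S} => π ↑x) ∈ t := by
    intro π hπ
    simp only [ht, mem_filter, mem_univ, true_and] at hπ ⊢
    exact ⟨fun a b h => Subtype.ext (π.injective h), fun x => hπ ↑x x.2⟩
  rw [Finset.card_eq_sum_card_fiberwise hmap]
  have hfib : ∀ g ∈ t,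
      ((univ.filter fun π : Equiv.Perm (Fin D) => ∀ x ∈ S, π x ∈ A).filter
        fun π => (fun x : {x // x ∈ S} => π ↑x) = g).card = Nat.factorial (D - S.card) := by
    intro g hg
    simp only [ht, mem_filter, mem_univ, true_and] at hg
    rw [← fiber_count S g hg.1]
    congr 1
    ext π
    simp only [mem_filter, mem_univ, true_and, funext_iff]
    constructor
    · rintro ⟨-, h⟩ x; exact h x
    · intro h
      exact ⟨fun x hx => (h ⟨x, hx⟩).symm ▸ hg.2 ⟨x, hx⟩, h⟩
  rw [Finset.sum_congr rfl hfib, Finset.sum_const, smul_eq_mul]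
  congr 1
  -- card t = descFactorial
  rw [← Fintype.card_coe A, ← Fintype.card_coe S, ← Fintype.card_embedding_eq]
  rw [← Fintype.card_subtype]
  apply Fintype.card_congr
  exact {
    toFun := fun g => ⟨fun x => ⟨g.1 x, g.2.2 x⟩, fun a b h => g.2.1 (congrArg Subtype.val h)⟩
    invFun := fun f => ⟨fun x => ↑(f x), fun a b h => f.injective (Subtype.ext h),
      fun x => (f x).2⟩
    left_inv := fun g => rfl
    right_inv := fun f => by ext x; rfl }

lemma bin_fiber_card {D k m : ℕ} (hm : 0 < m) (hD : D = k * m) (j : Fin k) :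
    (univ.filter fun y : Fin D => (y : ℕ) / m = (j : ℕ)).card = m := by
  have h : (univ.filter fun y : Fin D => (y : ℕ) / m = (j : ℕ)).card
      = (univ : Finset (Fin m)).card := by
    have hjm : ∀ r : Fin m, (j : ℕ) * m + (r : ℕ) < D := by
      intro r
      subst hD
      calc (j : ℕ) * m + (r : ℕ) < (j : ℕ) * m + m := by omega
        _ = ((j : ℕ) + 1) * m := by ring
        _ ≤ k * m := Nat.mul_le_mul_right m j.2
    refine Finset.card_bij' (fun y _ => (⟨(y : ℕ) % m, Nat.mod_lt _ hm⟩ : Fin m))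
      (fun r _ => (⟨(j : ℕ) * m + (r : ℕ), hjm r⟩ : Fin D)) ?_ ?_ ?_ ?_
    · intro y _; exact mem_univ _
    · intro r _
      simp only [mem_filter, mem_univ, true_and]
      rw [Nat.mul_comm (j : ℕ) m, Nat.mul_add_div hm]
      simp [Nat.div_eq_of_lt r.2]
    · intro y hy
      simp only [mem_filter, mem_univ, true_and] at hy
      apply Fin.ext
      simp only
      rw [← hy, Nat.div_add_mod']
    · intro r _
      apply Fin.ext
      simp only
      rw [Nat.mul_comm (j : ℕ) m, Nat.mul_add_mod, Nat.mod_eq_of_lt r.2]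
  exact h.trans (by simp)


lemma avoid_card {D k m : ℕ} (hm : 0 < m) (hD : D = k * m) (U : Finset (Fin k)) :
    (univ.filter fun y : Fin D => ∀ j ∈ U, (y : ℕ) / m ≠ (j : ℕ)).card = D - U.card * m := by
  classical
  have hlt : ∀ y : Fin D, (y : ℕ) / m < k := by
    intro y
    rw [Nat.div_lt_iff_lt_mul hm, ← hD]
    exact y.2
  set f : Fin D → Fin k := fun y => ⟨(y : ℕ) / m, hlt y⟩ with hf
  have hiff : ∀ y : Fin D, (∀ j ∈ U, (y : ℕ) / m ≠ (j : ℕ)) ↔ f y ∉ U := by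
    intro y
    constructor
    · intro h hmem
      exact h (f y) hmem rfl
    · intro h j hj hje
      exact h (by rwa [show f y = j from Fin.ext hje])
  have hB : (univ.filter fun y : Fin D => ¬ ∀ j ∈ U, (y : ℕ) / m ≠ (j : ℕ)).card
      = U.card * m := by
    have : (univ.filter fun y : Fin D => ¬ ∀ j ∈ U, (y : ℕ) / m ≠ (j : ℕ))
        = univ.filter fun y : Fin D => f y ∈ U := by
      ext y
      simp only [mem_filter, mem_univ, true_and]
      rw [← not_iff_not, hiff y, not_not]
    rw [this]
    rw [Finset.card_eq_sum_card_fiberwise (f := f) (s := univ.filter fun y : Fin D => f y ∈ U) (t := U)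
      (fun y hy => (mem_filter.mp hy).2)]
    rw [Finset.sum_congr rfl (fun j hj => ?_), Finset.sum_const, smul_eq_mul]
    have : ((univ.filter fun y : Fin D => f y ∈ U).filter fun y => f y = j)
        = univ.filter fun y : Fin D => (y : ℕ) / m = (j : ℕ) := by
      ext y
      simp only [mem_filter, mem_univ, true_and]
      constructor
      · rintro ⟨-, h⟩; rw [← h]
      · intro h; rw [show f y = j from Fin.ext h]; exact ⟨hj, rfl⟩
    rw [this, bin_fiber_card hm hD j]
  have := Finset.card_filter_add_card_filter_not
    (s := (univ : Finset (Fin D))) (p := fun y : Fin D => ∀ j ∈ U, (y : ℕ) / m ≠ (j : ℕ))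
  rw [Finset.card_univ, Fintype.card_fin] at this
  omega

lemma moebius {α : Type*} [DecidableEq α] [Fintype α] (g : Finset α → ℝ) (T : Finset α) :
    g T = ∑ U ∈ univ.powerset.filter (T ⊆ ·), (-1 : ℝ) ^ (U.card - T.card) *
            ∑ V ∈ univ.powerset.filter (U ⊆ ·), g V := by
  have step1 : ∀ U : Finset α, (∑ V ∈ univ.powerset.filter (U ⊆ ·), g V)
      = ∑ V ∈ univ.powerset, if U ⊆ V then g V else 0 := fun U => (Finset.sum_filter _ _)
  simp_rw [step1]
  -- reindex U = T ∪ W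
  have step2 : (∑ U ∈ univ.powerset.filter (T ⊆ ·), (-1 : ℝ) ^ (U.card - T.card) *
        ∑ V ∈ univ.powerset, if U ⊆ V then g V else 0)
      = ∑ W ∈ (Tᶜ : Finset α).powerset, (-1 : ℝ) ^ W.card *
        ∑ V ∈ univ.powerset, if T ∪ W ⊆ V then g V else 0 := by
    apply Finset.sum_nbij' (fun U => U \ T) (fun W => T ∪ W)
    · intro U hU
      simp only [mem_filter, mem_powerset] at hU
      simp only [mem_powerset]
      intro x hx
      simp only [mem_sdiff] at hx
      simp [hx.2]
    · intro W hW
      simp only [mem_powerset] at hW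
      simp only [mem_filter, mem_powerset]
      exact ⟨subset_univ _, subset_union_left⟩
    · intro U hU
      simp only [mem_filter, mem_powerset] at hU
      exact Finset.union_sdiff_of_subset hU.2
    · intro W hW
      simp only [mem_powerset] at hW
      apply Finset.union_sdiff_cancel_left
      rw [Finset.disjoint_left]
      intro a ha hW'
      exact (mem_compl.mp (hW hW')) ha
    · intro U hU
      simp only [mem_filter, mem_powerset] at hU
      rw [Finset.card_sdiff_of_subset hU.2, Finset.union_sdiff_of_subset hU.2]
  rw [step2]
  simp_rw [Finset.mul_sum]
  rw [Finset.sum_comm]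
  have inner : ∀ V ∈ univ.powerset,
      (∑ W ∈ (Tᶜ : Finset α).powerset, (-1 : ℝ) ^ W.card * (if T ∪ W ⊆ V then g V else 0))
        = if V = T then g V else 0 := by
    intro V _
    by_cases hTV : T ⊆ V
    · have h1 : ∀ W : Finset α, ((-1 : ℝ) ^ W.card * if T ∪ W ⊆ V then g V else 0)
          = if W ⊆ V then (-1 : ℝ) ^ W.card * g V else 0 := by
        intro W
        by_cases hWV : W ⊆ V
        · simp [hWV, Finset.union_subset hTV hWV]
        · have : ¬ T ∪ W ⊆ V := fun h => hWV (subset_union_right.trans h)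
          simp [hWV, this]
      simp_rw [h1]
      rw [← Finset.sum_filter]
      have h2 : (Tᶜ : Finset α).powerset.filter (· ⊆ V) = (V \ T).powerset := by
        ext W
        simp only [mem_filter, mem_powerset]
        constructor
        · rintro ⟨h3, h4⟩ x hx
          exact mem_sdiff.mpr ⟨h4 hx, mem_compl.mp (h3 hx)⟩
        · intro h3
          exact ⟨fun x hx => mem_compl.mpr (mem_sdiff.mp (h3 hx)).2,
            fun x hx => (mem_sdiff.mp (h3 hx)).1⟩
      rw [h2, ← Finset.sum_mul]
      have h3 : (∑ W ∈ (V \ T).powerset, (-1 : ℝ) ^ W.card)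
          = ((∑ W ∈ (V \ T).powerset, (-1 : ℤ) ^ W.card : ℤ) : ℝ) := by push_cast; rfl
      rw [h3, Finset.sum_powerset_neg_one_pow_card]
      by_cases hVT : V = T
      · simp [hVT]
      · have : V \ T ≠ ∅ := by
          intro h
          exact hVT (Finset.Subset.antisymm (Finset.sdiff_eq_empty_iff_subset.mp h) hTV)
        simp [this, hVT]
    · have hVT : V ≠ T := fun h => hTV (h ▸ Finset.Subset.refl _)
      have : ∀ W : Finset α, ((-1 : ℝ) ^ W.card * if T ∪ W ⊆ V then g V else 0) = 0 := by
        intro W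
        have : ¬ T ∪ W ⊆ V := fun h => hTV (subset_union_left.trans h)
        simp [this]
      simp [this, hVT]
  rw [Finset.sum_congr rfl inner, Finset.sum_ite_eq' univ.powerset T g]
  simp

lemma cast_descFactorial (a n : ℕ) :
    ((a.descFactorial n : ℕ) : ℝ) = ∏ t ∈ Finset.range n, ((a : ℝ) - t) := by
  rcases le_or_gt n a with h | h
  · rw [Nat.descFactorial_eq_prod_range, Nat.cast_prod]
    refine Finset.prod_congr rfl fun t ht => ?_
    rw [Nat.cast_sub (le_of_lt (lt_of_lt_of_le (Finset.mem_range.mp ht) h))]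
  · rw [Nat.descFactorial_eq_zero_iff_lt.mpr h, Nat.cast_zero]
    symm
    apply Finset.prod_eq_zero (Finset.mem_range.mpr h)
    simp

/-- Li–Owen–Zhang's formula: with a universe of size D partitioned into k bins of size D/k
and a set S of n elements placed by a uniformly random permutation, the probability that
exactly i bins are empty is
P_i = ∑_{s=0}^{k−i} ((−1)^s k!)/(i! s! (k−i−s)!) · ∏_{t=0}^{n−1} (D(1−(i+s)/k) − t)/(D − t). -/
theorem empty_bins_distribution (D k : ℕ) (hD : 0 < D) (hk : 0 < k) (hkD : k ∣ D)
    (S : Finset (Fin D)) (n i : ℕ) (hn : S.card = n) (hi : i ≤ k) :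
    ((Finset.univ.filter fun π : Equiv.Perm (Fin D) =>
        (Finset.univ.filter fun j : Fin k =>
          ∀ x ∈ S, ((π x : Fin D) : ℕ) / (D / k) ≠ (j : ℕ)).card = i).card : ℝ) /
      (Fintype.card (Equiv.Perm (Fin D))) =
    ∑ s ∈ Finset.range (k - i + 1),
      (((-1 : ℝ) ^ s * (Nat.factorial k : ℝ)) /
          ((Nat.factorial i : ℝ) * (Nat.factorial s : ℝ) * (Nat.factorial (k - i - s) : ℝ))) *
        ∏ t ∈ Finset.range n,
          (((D : ℝ) * (1 - ((i : ℝ) + (s : ℝ)) / (k : ℝ)) - (t : ℝ)) / ((D : ℝ) - (t : ℝ))) := by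
  classical
  obtain ⟨m, hDkm⟩ := hkD
  have hm : 0 < m := by
    rcases Nat.eq_zero_or_pos m with h | h
    · subst h; simp at hDkm; omega
    · exact h
  have hmk : D / k = m := by rw [hDkm]; exact Nat.mul_div_cancel_left m hk
  have hnD : n ≤ D := by
    rw [← hn]
    calc S.card ≤ Fintype.card (Fin D) := Finset.card_le_univ S |>.trans (by simp [Finset.card_univ])
      _ = D := Fintype.card_fin D
  rw [hmk]
  set ES : Equiv.Perm (Fin D) → Finset (Fin k) := fun π =>
    univ.filter fun j : Fin k => ∀ x ∈ S, ((π x : Fin D) : ℕ) / m ≠ (j : ℕ) with hES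
  -- real-valued exact count
  set e : Finset (Fin k) → ℝ := fun T => ((univ.filter fun π => ES π = T).card : ℝ) with he
  -- value of "at least" counts
  set fval : ℕ → ℝ :=
    fun j => (((D - j * m).descFactorial n * Nat.factorial (D - n) : ℕ) : ℝ) with hfval
  have hfU : ∀ U : Finset (Fin k),
      (∑ V ∈ univ.powerset.filter (U ⊆ ·), e V) = fval U.card := by
    intro U
    have h1 : (univ.filter fun π : Equiv.Perm (Fin D) => U ⊆ ES π).card
        = ∑ V ∈ univ.powerset.filter (U ⊆ ·), (univ.filter fun π => ES π = V).card := by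
      rw [Finset.card_eq_sum_card_fiberwise (f := ES) (t := univ.powerset.filter (U ⊆ ·))
        (fun π hπ => by
          simp only [mem_coe, mem_filter, mem_powerset, mem_univ, true_and] at hπ ⊢
          exact ⟨subset_univ _, hπ⟩)]
      refine Finset.sum_congr rfl fun V hV => ?_
      congr 1
      ext π
      simp only [mem_filter, mem_univ, true_and]
      constructor
      · rintro ⟨-, h⟩; exact h
      · intro h; refine ⟨?_, h⟩; rw [h]; exact (mem_filter.mp hV).2
    have h2 : (univ.filter fun π : Equiv.Perm (Fin D) => U ⊆ ES π)
        = univ.filter fun π : Equiv.Perm (Fin D) => ∀ x ∈ S,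
            π x ∈ (univ.filter fun y : Fin D => ∀ j ∈ U, (y : ℕ) / m ≠ (j : ℕ)) := by
      ext π
      simp only [mem_filter, mem_univ, true_and, hES, Finset.subset_iff]
      constructor
      · exact fun h x hx j hj => h hj x hx
      · exact fun h j hj x hx => h x hx j hj
    calc (∑ V ∈ univ.powerset.filter (U ⊆ ·), e V)
        = ((∑ V ∈ univ.powerset.filter (U ⊆ ·),
            (univ.filter fun π => ES π = V).card : ℕ) : ℝ) := by rw [Nat.cast_sum]
      _ = (((univ.filter fun π : Equiv.Perm (Fin D) => U ⊆ ES π).card : ℕ) : ℝ) := by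
          rw [← h1]
      _ = fval U.card := by
          rw [h2, count_perm_into, avoid_card hm hDkm, hn]
  -- numerator
  have hnum : ((univ.filter fun π : Equiv.Perm (Fin D) => (ES π).card = i).card : ℝ)
      = ∑ T ∈ powersetCard i (univ : Finset (Fin k)), e T := by
    have h3 : (univ.filter fun π : Equiv.Perm (Fin D) => (ES π).card = i).card
        = ∑ T ∈ powersetCard i (univ : Finset (Fin k)),
            (univ.filter fun π => ES π = T).card := by
      rw [Finset.card_eq_sum_card_fiberwise (f := ES) (t := powersetCard i univ)
        (fun π hπ => mem_powersetCard.mpr ⟨subset_univ _, (mem_filter.mp hπ).2⟩)]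
      refine Finset.sum_congr rfl fun T hT => ?_
      congr 1
      ext π
      simp only [mem_filter, mem_univ, true_and]
      constructor
      · rintro ⟨-, h⟩; exact h
      · intro h; exact ⟨by rw [h]; exact (mem_powersetCard.mp hT).2, h⟩
    rw [h3, Nat.cast_sum]
  have hmoeb : ∀ T : Finset (Fin k),
      e T = ∑ U ∈ univ.powerset.filter (T ⊆ ·), (-1 : ℝ) ^ (U.card - T.card) * fval U.card := by
    intro T
    rw [moebius e T]
    exact Finset.sum_congr rfl fun U _ => by rw [hfU U]
  have hcardPerm : ((Fintype.card (Equiv.Perm (Fin D)) : ℕ) : ℝ) = (Nat.factorial D : ℝ) := by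
    rw [Fintype.card_perm, Fintype.card_fin]
  rw [hnum, hcardPerm, Finset.sum_congr rfl (fun T _ => hmoeb T)]
  have hswap : (∑ T ∈ powersetCard i (univ : Finset (Fin k)),
      ∑ U ∈ univ.powerset.filter (T ⊆ ·), (-1 : ℝ) ^ (U.card - T.card) * fval U.card)
    = ∑ U ∈ (univ : Finset (Fin k)).powerset,
      ∑ T ∈ powersetCard i U, (-1 : ℝ) ^ (U.card - T.card) * fval U.card := by
    apply Finset.sum_comm'
    intro T U
    simp only [mem_powersetCard, mem_filter, mem_powerset]
    constructor
    · rintro ⟨⟨-, hc⟩, -, hTU⟩; exact ⟨⟨hTU, hc⟩, subset_univ _⟩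
    · rintro ⟨⟨hTU, hc⟩, -⟩; exact ⟨⟨subset_univ _, hc⟩, subset_univ _, hTU⟩
  rw [hswap]
  have hinner : ∀ U ∈ (univ : Finset (Fin k)).powerset,
      (∑ T ∈ powersetCard i U, (-1 : ℝ) ^ (U.card - T.card) * fval U.card)
        = ((U.card.choose i : ℕ) : ℝ) * ((-1 : ℝ) ^ (U.card - i) * fval U.card) := by
    intro U _
    rw [Finset.sum_congr rfl (fun T hT => by rw [(mem_powersetCard.mp hT).2]),
      Finset.sum_const, Finset.card_powersetCard, nsmul_eq_mul]
  rw [Finset.sum_congr rfl hinner, Finset.sum_powerset]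
  have hku : (univ : Finset (Fin k)).card = k := by simp
  rw [hku]
  have houter : ∀ j ∈ Finset.range (k + 1),
      (∑ U ∈ powersetCard j (univ : Finset (Fin k)),
        ((U.card.choose i : ℕ) : ℝ) * ((-1 : ℝ) ^ (U.card - i) * fval U.card))
      = ((k.choose j : ℕ) : ℝ) * (((j.choose i : ℕ) : ℝ) * ((-1 : ℝ) ^ (j - i) * fval j)) := by
    intro j _
    rw [Finset.sum_congr rfl (fun U hU => by rw [(mem_powersetCard.mp hU).2]),
      Finset.sum_const, Finset.card_powersetCard, hku, nsmul_eq_mul]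
  rw [Finset.sum_congr rfl houter]
  conv_lhs => rw [Finset.range_eq_Ico, ← Finset.sum_Ico_consecutive _ (Nat.zero_le i)
    (by omega : i ≤ k + 1)]
  have hzero : (∑ j ∈ Finset.Ico 0 i,
      ((k.choose j : ℕ) : ℝ) * (((j.choose i : ℕ) : ℝ) * ((-1 : ℝ) ^ (j - i) * fval j))) = 0 := by
    apply Finset.sum_eq_zero
    intro j hj
    rw [Nat.choose_eq_zero_of_lt (Finset.mem_Ico.mp hj).2]
    simp
  rw [hzero, zero_add, Finset.sum_Ico_eq_sum_range]
  have hki : k + 1 - i = k - i + 1 := by omega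
  rw [hki, Finset.sum_div]
  refine Finset.sum_congr rfl fun s hs => ?_
  have hs' : s ≤ k - i := by have := Finset.mem_range.mp hs; omega
  have hisk : i + s ≤ k := by omega
  have hisi : i + s - i = s := by omega
  rw [hisi]
  have hDr : (D : ℝ) = (k : ℝ) * (m : ℝ) := by exact_mod_cast congrArg Nat.cast hDkm
  have hk0 : (k : ℝ) ≠ 0 := Nat.cast_ne_zero.mpr (by omega)
  have hjm : (i + s) * m ≤ D := by rw [hDkm]; exact Nat.mul_le_mul_right m hisk
  have hfrac : fval (i + s) / (Nat.factorial D : ℝ)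
      = ∏ t ∈ Finset.range n, (((D : ℝ) - ((i : ℝ) + (s : ℝ)) * (m : ℝ) - (t : ℝ))
          / ((D : ℝ) - (t : ℝ))) := by
    have hfac : (Nat.factorial D : ℝ)
        = ((D.descFactorial n : ℕ) : ℝ) * ((Nat.factorial (D - n) : ℕ) : ℝ) := by
      rw [← Nat.cast_mul, mul_comm, Nat.factorial_mul_descFactorial hnD]
    rw [hfval]
    simp only
    rw [Nat.cast_mul, hfac, mul_div_mul_right _ _
      (Nat.cast_ne_zero.mpr (Nat.factorial_ne_zero _)), cast_descFactorial,
      cast_descFactorial, ← Finset.prod_div_distrib]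
    refine Finset.prod_congr rfl fun t _ => ?_
    congr 2
    rw [Nat.cast_sub hjm]
    push_cast
    ring
  have hprod : (∏ t ∈ Finset.range n,
        (((D : ℝ) * (1 - ((i : ℝ) + (s : ℝ)) / (k : ℝ)) - (t : ℝ)) / ((D : ℝ) - (t : ℝ))))
      = fval (i + s) / (Nat.factorial D : ℝ) := by
    rw [hfrac]
    refine Finset.prod_congr rfl fun t _ => ?_
    congr 2
    rw [hDr]
    field_simp
  have hcoeff : ((k.choose (i + s) : ℕ) : ℝ) * (((i + s).choose i : ℕ) : ℝ)
      = (Nat.factorial k : ℝ) /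
          ((Nat.factorial i : ℝ) * (Nat.factorial s : ℝ) * (Nat.factorial (k - i - s) : ℝ)) := by
    rw [Nat.cast_choose ℝ hisk, Nat.cast_choose ℝ (Nat.le_add_right i s)]
    have h1 : i + s - i = s := by omega
    have h2 : k - (i + s) = k - i - s := by omega
    rw [h1, h2]
    have hne : ∀ a : ℕ, ((Nat.factorial a : ℕ) : ℝ) ≠ 0 :=
      fun a => Nat.cast_ne_zero.mpr (Nat.factorial_ne_zero a)
    field_simp
  rw [hprod]
  have hre : ((-1 : ℝ) ^ s * (Nat.factorial k : ℝ)) /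
        ((Nat.factorial i : ℝ) * (Nat.factorial s : ℝ) * (Nat.factorial (k - i - s) : ℝ))
      = (-1 : ℝ) ^ s * (((k.choose (i + s) : ℕ) : ℝ) * (((i + s).choose i : ℕ) : ℝ)) := by
    rw [hcoeff]
    ring
  rw [hre]
  ring
end

section
/- Let Ω = {1,...,D} with k | D, and partition Ω into k consecutive bins of size D/k. Let S₁, S₂ ⊆ Ω and π a uniformly random permutation of Ω. Fix a bin j and condition on the event that bin j is not simultaneously empty, i.e., π(S₁∪S₂) intersects bin j. Then the probability that the minimum of π(S₁) within bin j equals the minimum of π(S₂) within bin j (with the convention that both OPH values collide only if both sets hit bin j and their minima agree) equals R = |S₁∩S₂|/|S₁∪S₂|. -/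
open Finset

/-- Eq. (7) of the paper: conditioned on bin j not being simultaneously empty
(π(S₁ ∪ S₂) meets bin j), the probability that the one-permutation-hash values of S₁ and
S₂ in bin j collide (both sets hit bin j and their minima there agree) equals
R = |S₁ ∩ S₂|/|S₁ ∪ S₂|. -/
theorem oph_conditional_collision (D k : ℕ) (hD : 0 < D) (hk : 0 < k) (hkD : k ∣ D)
    (S₁ S₂ : Finset (Fin D)) (hne : (S₁ ∪ S₂).Nonempty) (j : Fin k) :
    (((Finset.univ.filter fun π : Equiv.Perm (Fin D) =>
        (((S₁ ∪ S₂).image π).filter (fun x : Fin D => (x : ℕ) / (D / k) = (j : ℕ))).Nonempty ∧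
        ((S₁.image π).filter (fun x : Fin D => (x : ℕ) / (D / k) = (j : ℕ))).Nonempty ∧
        ((S₂.image π).filter (fun x : Fin D => (x : ℕ) / (D / k) = (j : ℕ))).Nonempty ∧
        ((S₁.image π).filter (fun x : Fin D => (x : ℕ) / (D / k) = (j : ℕ))).min =
          ((S₂.image π).filter (fun x : Fin D => (x : ℕ) / (D / k) = (j : ℕ))).min).card : ℝ) /
      ((Finset.univ.filter fun π : Equiv.Perm (Fin D) =>
        (((S₁ ∪ S₂).image π).filter (fun x : Fin D => (x : ℕ) / (D / k) = (j : ℕ))).Nonempty).card : ℝ)) =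
    ((S₁ ∩ S₂).card : ℝ) / ((S₁ ∪ S₂).card : ℝ) := by
  have hDk : 0 < D / k := Nat.div_pos (Nat.le_of_dvd hD hkD) hk
  set F : Equiv.Perm (Fin D) → Finset (Fin D) := fun π =>
    ((S₁ ∪ S₂).image π).filter (fun x : Fin D => (x : ℕ) / (D / k) = (j : ℕ)) with hF
  set F₁ : Equiv.Perm (Fin D) → Finset (Fin D) := fun π =>
    (S₁.image π).filter (fun x : Fin D => (x : ℕ) / (D / k) = (j : ℕ)) with hF1
  set F₂ : Equiv.Perm (Fin D) → Finset (Fin D) := fun π =>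
    (S₂.image π).filter (fun x : Fin D => (x : ℕ) / (D / k) = (j : ℕ)) with hF2
  set B : Finset (Equiv.Perm (Fin D)) := Finset.univ.filter fun π => (F π).Nonempty with hB
  set A : Finset (Equiv.Perm (Fin D)) := Finset.univ.filter fun π =>
    (F π).Nonempty ∧ (F₁ π).Nonempty ∧ (F₂ π).Nonempty ∧ (F₁ π).min = (F₂ π).min with hA
  -- F π = F₁ π ∪ F₂ π
  have hFun : ∀ π : Equiv.Perm (Fin D), F π = F₁ π ∪ F₂ π := by
    intro π
    simp only [hF, hF1, hF2, Finset.image_union, Finset.filter_union]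
  have d : Fin D := ⟨0, hD⟩
  -- the argmin function
  set g : Equiv.Perm (Fin D) → Fin D := fun π => π.symm (WithTop.untopD d (F π).min) with hg
  -- basic facts about g for π ∈ B
  have hminle : ∀ s t : Finset (Fin D), s ⊆ t → t.min ≤ s.min := fun s t hst =>
    Finset.le_min (fun a ha => Finset.min_le (hst ha))
  have hsub1 : ∀ π : Equiv.Perm (Fin D), F₁ π ⊆ F π := by
    intro π; rw [hFun π]; exact Finset.subset_union_left
  have hsub2 : ∀ π : Equiv.Perm (Fin D), F₂ π ⊆ F π := by
    intro π; rw [hFun π]; exact Finset.subset_union_right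
  have hmin : ∀ π : Equiv.Perm (Fin D), (F π).Nonempty →
      (F π).min = (π (g π) : WithTop (Fin D)) ∧ g π ∈ S₁ ∪ S₂ := by
    intro π h
    have hv : (F π).min = ((F π).min' h : WithTop (Fin D)) := (Finset.coe_min' h).symm
    have hgv : g π = π.symm ((F π).min' h) := by
      rw [hg]; simp only [hv, WithTop.untopD_coe]
    have hmem : (F π).min' h ∈ F π := Finset.min'_mem _ _
    have hmem' : (F π).min' h ∈ (S₁ ∪ S₂).image π := (Finset.mem_filter.mp hmem).1
    obtain ⟨a, ha, hpa⟩ := Finset.mem_image.mp hmem'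
    constructor
    · rw [hgv, Equiv.apply_symm_apply]; exact hv
    · rw [hgv, ← hpa, Equiv.symm_apply_apply]; exact ha
  -- swapping two elements of S₁ ∪ S₂ preserves images
  have hswapim : ∀ (T : Finset (Fin D)) (a b : Fin D), a ∈ T → b ∈ T →
      ∀ π : Equiv.Perm (Fin D), T.image ((Equiv.swap a b).trans π) = T.image π := by
    intro T a b ha hb π
    have h1 : T.image ((Equiv.swap a b).trans π) = (T.image (Equiv.swap a b)).image π := by
      rw [Finset.image_image]; rfl
    have h2 : T.image (Equiv.swap a b) = T := by
      apply Finset.eq_of_subset_of_card_le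
      · intro x hx
        obtain ⟨y, hy, hyx⟩ := Finset.mem_image.mp hx
        rcases eq_or_ne y a with rfl | hya
        · rw [Equiv.swap_apply_left] at hyx; exact hyx ▸ hb
        rcases eq_or_ne y b with rfl | hyb
        · rw [Equiv.swap_apply_right] at hyx; exact hyx ▸ ha
        · rw [Equiv.swap_apply_of_ne_of_ne hya hyb] at hyx; exact hyx ▸ hy
      · rw [Finset.card_image_of_injective _ (Equiv.injective _)]
    rw [h1, h2]
  -- characterization of A
  have hchar : ∀ π : Equiv.Perm (Fin D), π ∈ A ↔ π ∈ B ∧ g π ∈ S₁ ∩ S₂ := by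
    intro π
    rw [hA, hB, Finset.mem_filter, Finset.mem_filter]
    simp only [Finset.mem_univ, true_and]
    constructor
    · rintro ⟨h, h₁, h₂, heq⟩
      refine ⟨h, ?_⟩
      have hv1 : (F₁ π).min = ((F₁ π).min' h₁ : WithTop (Fin D)) := (Finset.coe_min' h₁).symm
      have hv2 : (F₂ π).min = ((F₂ π).min' h₂ : WithTop (Fin D)) := (Finset.coe_min' h₂).symm
      have hFm : (F π).min = (F₁ π).min := by
        refine le_antisymm (hminle _ _ (hsub1 π)) (Finset.le_min ?_)
        intro a ha
        rw [hFun π, Finset.mem_union] at ha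
        rcases ha with ha | ha
        · exact Finset.min_le ha
        · rw [heq]; exact Finset.min_le ha
      obtain ⟨hm, _⟩ := hmin π h
      have h12 : ((F₂ π).min' h₂ : WithTop (Fin D)) = ((F₁ π).min' h₁ : WithTop (Fin D)) := by
        rw [← hv1, ← hv2, heq]
      have hvv : ((F₁ π).min' h₁ : WithTop (Fin D)) = (π (g π) : WithTop (Fin D)) := by
        rw [← hv1, ← hFm, hm]
      have hvv' : (F₁ π).min' h₁ = π (g π) := WithTop.coe_injective hvv
      have hvv2 : (F₂ π).min' h₂ = π (g π) := WithTop.coe_injective (h12.trans hvv)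
      have hm1 : (F₁ π).min' h₁ ∈ S₁.image π := (Finset.mem_filter.mp (Finset.min'_mem _ h₁)).1
      have hm2 : (F₂ π).min' h₂ ∈ S₂.image π := (Finset.mem_filter.mp (Finset.min'_mem _ h₂)).1
      obtain ⟨a₁, ha₁, hpa₁⟩ := Finset.mem_image.mp hm1
      obtain ⟨a₂, ha₂, hpa₂⟩ := Finset.mem_image.mp hm2
      have e1 : a₁ = g π := π.injective (by rw [hpa₁, hvv'])
      have e2 : a₂ = g π := π.injective (by rw [hpa₂, hvv2])
      exact Finset.mem_inter.mpr ⟨e1 ▸ ha₁, e2 ▸ ha₂⟩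
    · rintro ⟨h, hgm⟩
      obtain ⟨hm, hgu⟩ := hmin π h
      obtain ⟨hg1, hg2⟩ := Finset.mem_inter.mp hgm
      have hvF : π (g π) ∈ F π := by
        have := Finset.min'_mem (F π) h
        have hv : (F π).min = ((F π).min' h : WithTop (Fin D)) := (Finset.coe_min' h).symm
        have : (F π).min' h = π (g π) := WithTop.coe_injective (by rw [← hv, hm])
        exact this ▸ Finset.min'_mem (F π) h
      have hpr : (π (g π) : ℕ) / (D / k) = (j : ℕ) := (Finset.mem_filter.mp hvF).2
      have hv1 : π (g π) ∈ F₁ π := by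
        rw [hF1]
        exact Finset.mem_filter.mpr ⟨Finset.mem_image_of_mem π hg1, hpr⟩
      have hv2 : π (g π) ∈ F₂ π := by
        rw [hF2]
        exact Finset.mem_filter.mpr ⟨Finset.mem_image_of_mem π hg2, hpr⟩
      have hle1 : (F π).min ≤ (F₁ π).min := hminle _ _ (hsub1 π)
      have hle2 : (F π).min ≤ (F₂ π).min := hminle _ _ (hsub2 π)
      have he1 : (F₁ π).min = (π (g π) : WithTop (Fin D)) :=
        le_antisymm (Finset.min_le hv1) (hm ▸ hle1)
      have he2 : (F₂ π).min = (π (g π) : WithTop (Fin D)) :=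
        le_antisymm (Finset.min_le hv2) (hm ▸ hle2)
      exact ⟨h, ⟨_, hv1⟩, ⟨_, hv2⟩, he1.trans he2.symm⟩
  -- all fibers over S₁ ∪ S₂ have equal cardinality
  have hfib : ∀ a ∈ S₁ ∪ S₂, ∀ b ∈ S₁ ∪ S₂,
      (B.filter fun π => g π = a).card = (B.filter fun π => g π = b).card := by
    intro a ha b hb
    have hFswap : ∀ π : Equiv.Perm (Fin D), F ((Equiv.swap a b).trans π) = F π := by
      intro π
      rw [hF]
      simp only [hswapim (S₁ ∪ S₂) a b ha hb π]
    have hgswap : ∀ π : Equiv.Perm (Fin D), g ((Equiv.swap a b).trans π) = Equiv.swap a b (g π) := by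
      intro π
      rw [hg]
      simp only [hFswap π, Equiv.symm_trans_apply, Equiv.symm_swap]
    have hmem : ∀ (x y : Fin D) (π : Equiv.Perm (Fin D)),
        π ∈ B.filter (fun π => g π = x) → Equiv.swap x y = Equiv.swap a b →
        (Equiv.swap a b).trans π ∈ B.filter (fun π => g π = y) := by
      intro x y π hπ hxy
      rw [Finset.mem_filter] at hπ ⊢
      refine ⟨?_, ?_⟩
      · rw [hB, Finset.mem_filter] at hπ ⊢
        exact ⟨Finset.mem_univ _, (hFswap π) ▸ hπ.1.2⟩
      · rw [hgswap π, hπ.2, ← hxy, Equiv.swap_apply_left]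
    apply Finset.card_bij' (fun π _ => (Equiv.swap a b).trans π) (fun π _ => (Equiv.swap a b).trans π)
    · intro π hπ; exact hmem a b π hπ rfl
    · intro π hπ; exact hmem b a π hπ (Equiv.swap_comm b a)
    · intro π _
      ext x
      simp [Equiv.swap_apply_self]
    · intro π _
      ext x
      simp [Equiv.swap_apply_self]
  obtain ⟨a₀, ha₀⟩ := hne
  set c₀ : ℕ := (B.filter fun π => g π = a₀).card with hc₀
  -- B.card
  have hBcard : B.card = (S₁ ∪ S₂).card * c₀ := by
    rw [Finset.card_eq_sum_card_fiberwise (f := g) (t := S₁ ∪ S₂)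
      (fun π hπ => (hmin π ((Finset.mem_filter.mp hπ).2)).2)]
    rw [Finset.sum_congr rfl (fun a ha => hfib a ha a₀ ha₀), Finset.sum_const, smul_eq_mul]
  -- A.card
  have hAB : ∀ a ∈ S₁ ∩ S₂, (A.filter fun π => g π = a) = (B.filter fun π => g π = a) := by
    intro a ha
    ext π
    constructor
    · intro h
      rcases Finset.mem_filter.mp h with ⟨hA', hga⟩
      exact Finset.mem_filter.mpr ⟨((hchar π).mp hA').1, hga⟩
    · intro h
      rcases Finset.mem_filter.mp h with ⟨hB', hga⟩
      exact Finset.mem_filter.mpr ⟨(hchar π).mpr ⟨hB', hga ▸ ha⟩, hga⟩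
  have hAcard : A.card = (S₁ ∩ S₂).card * c₀ := by
    rw [Finset.card_eq_sum_card_fiberwise (f := g) (t := S₁ ∩ S₂)
      (fun π hπ => ((hchar π).mp hπ).2)]
    rw [Finset.sum_congr rfl (fun a ha => by
      rw [hAB a ha, hfib a (Finset.inter_subset_union ha) a₀ ha₀]),
      Finset.sum_const, smul_eq_mul]
  -- B is nonempty
  have hBne : B.Nonempty := by
    have hjy : (j : ℕ) * (D / k) < D := by
      calc (j : ℕ) * (D / k) < k * (D / k) := by
            exact (Nat.mul_lt_mul_right hDk).mpr j.isLt
        _ = D := Nat.mul_div_cancel' hkD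
    set y : Fin D := ⟨(j : ℕ) * (D / k), hjy⟩ with hy
    refine ⟨Equiv.swap a₀ y, ?_⟩
    rw [hB, Finset.mem_filter]
    refine ⟨Finset.mem_univ _, ⟨y, ?_⟩⟩
    rw [hF]
    refine Finset.mem_filter.mpr ⟨?_, ?_⟩
    · refine Finset.mem_image.mpr ⟨a₀, ha₀, ?_⟩
      exact Equiv.swap_apply_left a₀ y
    · show ((j : ℕ) * (D / k)) / (D / k) = (j : ℕ)
      exact Nat.mul_div_cancel _ hDk
  -- c₀ is positive
  have hc₀pos : 0 < c₀ := by
    by_contra hc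
    push_neg at hc
    interval_cases c₀
    · rw [Nat.mul_zero] at hBcard
      exact absurd hBcard (Finset.card_ne_zero_of_mem hBne.choose_spec)
  -- finish
  have hUcard : 0 < (S₁ ∪ S₂).card := Finset.card_pos.mpr ⟨a₀, ha₀⟩
  show ((A.card : ℝ)) / (B.card : ℝ) = _
  rw [hAcard, hBcard]
  push_cast
  rw [mul_div_mul_right _ _ (by exact_mod_cast hc₀pos.ne')]
end
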